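/- arXiv:1109.4775 — 2 statements merged into one kernel-verified Lean document; each statement's English description precedes it below -/
import Mathlib

section
/- Let k be a field and let Γ be the unique real number in [1,2] satisfying Γ^{-4} + Γ^{-5} + Γ^{-6} = 1. For any finite simple triangle-free graph G with n vertices, the total Betti number of its independence complex satisfies b(Ind(G)) ≤ Γ^n. -/
open Finset

attribute [local instance] Classical.propDecidable

/-- A finite abstract simplicial complex on the ambient (finite) vertex type `V`:
a collection of finite subsets of `V` containing the empty set and closed
under taking subsets. -/
structure SComplex (V : Type*) where
  faces : Set (Finset V)
  empty_mem : ∅ ∈ faces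
  down_closed : ∀ ⦃s t : Finset V⦄, s ∈ faces → t ⊆ s → t ∈ faces

namespace SComplex

variable {V : Type*} {W : Type*}

/-- The space of `j`-chains over the field `k`: formal `k`-linear combinations of
the faces of cardinality `j` (the free `k`-module on them; `V` is finite).
Here `j = i + 1` where `i` is the reduced homological degree; in particular
`j = 0` corresponds to the empty face (reduced degree `-1`). -/
abbrev Chains (k : Type*) [Field k] [Fintype V] (K : SComplex V) (j : ℕ) : Type _ :=
  {s : Finset V // s ∈ K.faces ∧ s.card = j} → k

/-- The boundary of a single `(j+1)`-face: the alternating sum of its codimension-one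
subfaces, with signs determined by a (well-)ordering of the vertex type. -/
noncomputable def bdryElt (k : Type*) [Field k] [Fintype V] (K : SComplex V) (j : ℕ)
    (s : {s : Finset V // s ∈ K.faces ∧ s.card = j + 1}) : Chains k K j :=
  letI : LinearOrder V := IsWellOrder.linearOrder WellOrderingRel
  fun t =>
    if t.1 ⊆ s.1 then
      ∑ v ∈ s.1 \ t.1, (-1 : k) ^ (s.1.filter (fun w => w < v)).card
    else 0

/-- The simplicial boundary operator from `(j+1)`-chains to `j`-chains. -/
noncomputable def bdry (k : Type*) [Field k] [Fintype V] (K : SComplex V) (j : ℕ) :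
    Chains k K (j + 1) →ₗ[k] Chains k K j :=
  ∑ s : {s : Finset V // s ∈ K.faces ∧ s.card = j + 1},
    (LinearMap.toSpanSingleton k _ (bdryElt k K j s)).comp (LinearMap.proj s)

/-- The submodule of cycles in chain degree `j` (everything in degree `0`,
since the boundary of the empty face is zero). -/
noncomputable def cycles (k : Type*) [Field k] [Fintype V] (K : SComplex V) :
    (j : ℕ) → Submodule k (Chains k K j)
  | 0 => ⊤
  | (j + 1) => LinearMap.ker (bdry k K j)

/-- The submodule of boundaries in chain degree `j`. -/
noncomputable def bdries (k : Type*) [Field k] [Fintype V] (K : SComplex V) (j : ℕ) :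
    Submodule k (Chains k K j) :=
  LinearMap.range (bdry k K j)

/-- The reduced simplicial homology `H̃_{j-1}(K; k)` of `K` with coefficients in `k`,
in chain degree `j` (that is, homological degree `i = j - 1`): cycles modulo
boundaries. -/
noncomputable abbrev homologyMod (k : Type*) [Field k] [Fintype V] (K : SComplex V) (j : ℕ) :=
  ↥(cycles k K j) ⧸ Submodule.comap (cycles k K j).subtype (bdries k K j)

/-- The reduced Betti number `b_{j-1}(K) = dim_k H̃_{j-1}(K; k)` (chain-degree
indexing: `bettiNum k K j` is the Betti number in homological degree `j - 1`). -/
noncomputable def bettiNum (k : Type*) [Field k] [Fintype V] (K : SComplex V) (j : ℕ) : ℕ :=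
  Module.finrank k (homologyMod k K j)

/-- The total (reduced) Betti number `b(K) = ∑ᵢ dim_k H̃ᵢ(K; k)`. -/
noncomputable def totalBetti (k : Type*) [Field k] [Fintype V] (K : SComplex V) : ℕ :=
  ∑ j ∈ Finset.range (Fintype.card V + 1), bettiNum k K j

/-- The set of maximal faces (facets) of `K`. -/
def Facets (K : SComplex V) : Set (Finset V) :=
  {F | F ∈ K.faces ∧ ∀ G ∈ K.faces, F ⊆ G → F = G}

/-- A minimal non-face: not a face, but all proper subsets are faces. -/
def IsMinNonFace (K : SComplex V) (s : Finset V) : Prop :=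
  s ∉ K.faces ∧ ∀ t ⊂ s, t ∈ K.faces

/-- The vertex set of a complex. -/
def vertices (K : SComplex V) : Set V := {v | {v} ∈ K.faces}

/-- Deletion of a vertex: the induced subcomplex on `V(K) \ {v}`. -/
def delete (K : SComplex V) (v : V) : SComplex V where
  faces := {s | s ∈ K.faces ∧ v ∉ s}
  empty_mem := ⟨K.empty_mem, by simp⟩
  down_closed := by
    intro s t hs hts
    exact ⟨K.down_closed hs.1 hts, fun hv => hs.2 (hts hv)⟩

/-- The link of a vertex `v`: all faces `τ` with `v ∉ τ` and `τ ∪ {v} ∈ K`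
(together with the empty face). -/
def link (K : SComplex V) (v : V) : SComplex V where
  faces := {s | v ∉ s ∧ insert v s ∈ K.faces} ∪ {∅}
  empty_mem := Or.inr rfl
  down_closed := by
    intro s t hs hts
    rcases hs with ⟨hvs, hins⟩ | h
    · exact Or.inl ⟨fun hvt => hvs (hts hvt),
        K.down_closed hins (Finset.insert_subset_insert v hts)⟩
    · right
      have hs' : s = ∅ := h
      subst hs'
      exact Finset.subset_empty.mp hts

/-- The join of two complexes (on the disjoint union of the vertex types `V` and `W`):
the faces are exactly the unions `σ ⊔ τ` of a face `σ` of `X` and a face `τ` of `Y`. -/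
def join (X : SComplex V) (Y : SComplex W) : SComplex (V ⊕ W) where
  faces := {s | s.preimage Sum.inl Sum.inl_injective.injOn ∈ X.faces ∧
               s.preimage Sum.inr Sum.inr_injective.injOn ∈ Y.faces}
  empty_mem := by
    constructor
    · simpa using X.empty_mem
    · simpa using Y.empty_mem
  down_closed := by
    intro s t hs hts
    constructor
    · refine X.down_closed hs.1 (fun x hx => ?_)
      simp only [Finset.mem_preimage] at hx ⊢
      exact hts hx
    · refine Y.down_closed hs.2 (fun x hx => ?_)
      simp only [Finset.mem_preimage] at hx ⊢
      exact hts hx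

end SComplex

open SComplex

/-- The independence complex of a graph: faces are the independent sets. -/
def indComplex {V : Type*} (G : SimpleGraph V) : SComplex V where
  faces := {s | ∀ ⦃v⦄, v ∈ s → ∀ ⦃w⦄, w ∈ s → ¬ G.Adj v w}
  empty_mem := by intro v hv; simp at hv
  down_closed := by
    intro s t hs hts v hv w hw
    exact hs (hts hv) (hts hw)

/-- The neighbourhood complex of a graph: faces are the sets of vertices having a
common neighbour; its vertices are exactly the non-isolated vertices of `G`. -/
def nbhdComplex {V : Type*} (G : SimpleGraph V) : SComplex V where
  faces := {s | s = ∅ ∨ ∃ v, ∀ w ∈ s, G.Adj v w}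
  empty_mem := Or.inl rfl
  down_closed := by
    intro s t hs hts
    rcases hs with h | ⟨v, hv⟩
    · subst h
      exact Or.inl (Finset.subset_empty.mp hts)
    · exact Or.inr ⟨v, fun w hw => hv w (hts hw)⟩

/-- The disjoint union `G ⊔ H` of two graphs. -/
def disjUnion {V W : Type*} (G : SimpleGraph V) (H : SimpleGraph W) :
    SimpleGraph (V ⊕ W) where
  Adj x y := match x, y with
    | Sum.inl a, Sum.inl b => G.Adj a b
    | Sum.inr a, Sum.inr b => H.Adj a b
    | _, _ => False
  symm := by
    constructor
    rintro (a | a) (b | b) h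
    · exact h.symm
    · exact h.elim
    · exact h.elim
    · exact h.symm
  loopless := by
    constructor
    rintro (a | a) h
    · exact G.loopless.irrefl a h
    · exact H.loopless.irrefl a h

/-- The graph join `G ⊕ H`: disjoint union together with all edges between the parts. -/
def graphJoin {V W : Type*} (G : SimpleGraph V) (H : SimpleGraph W) :
    SimpleGraph (V ⊕ W) where
  Adj x y := match x, y with
    | Sum.inl a, Sum.inl b => G.Adj a b
    | Sum.inr a, Sum.inr b => H.Adj a b
    | _, _ => True
  symm := by
    constructor
    rintro (a | a) (b | b) h
    · exact h.symm
    · trivial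
    · trivial
    · exact h.symm
  loopless := by
    constructor
    rintro (a | a) h
    · exact G.loopless.irrefl a h
    · exact H.loopless.irrefl a h

/-- The total algebraic Betti number `β(G) = ∑_{W ⊆ V(G)} b(Ind(G[W]))` of the
Stanley–Reisner ring of `Ind(G)` (this is Hochster's formula). -/
noncomputable def algBetti (k : Type*) [Field k] {V : Type*} [Fintype V]
    (G : SimpleGraph V) : ℕ :=
  ∑ W : Finset V, totalBetti k (indComplex (G.induce ↑W))

/-- The bipartite graph `Bip(K)` associated to a complex `K`: one side is the vertex
set of `K`, the other side is the set of maximal faces of `K`, and `v` is adjacent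
to `F` iff `v ∉ F`. -/
def bipGraph {V : Type*} (K : SComplex V) : SimpleGraph (V ⊕ ↥K.Facets) where
  Adj x y := match x, y with
    | Sum.inl v, Sum.inr F => v ∉ F.1
    | Sum.inr F, Sum.inl v => v ∉ F.1
    | _, _ => False
  symm := by
    constructor
    rintro (a | a) (b | b) h
    · exact h.elim
    · exact h
    · exact h
    · exact h.elim
  loopless := by
    constructor
    rintro (a | a) h <;> exact h.elim

noncomputable instance {V : Type*} [Fintype V] (K : SComplex V) : Fintype ↥K.Facets :=
  (Set.toFinite _).fintype


set_option synthInstance.maxHeartbeats 1000000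
set_option maxHeartbeats 2000000
set_option linter.unusedSectionVars false
namespace TB

open SComplex

variable {V : Type*} [Fintype V]

/-- the fixed well-order used in `bdryElt` -/
noncomputable def lo (V : Type*) : LinearOrder V := IsWellOrder.linearOrder WellOrderingRel

noncomputable local instance (priority := high) : LinearOrder V := lo V

variable (k : Type*) [Field k] (K : SComplex V)

abbrev FaceJ (K : SComplex V) (j : ℕ) := {s : Finset V // s ∈ K.faces ∧ s.card = j}

lemma bdryElt_apply (j : ℕ) (s : FaceJ K (j+1)) (t : FaceJ K j) :
    bdryElt k K j s t =
      if t.1 ⊆ s.1 then ∑ x ∈ s.1 \ t.1, (-1 : k) ^ (s.1.filter (fun w => w < x)).card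
      else 0 := rfl

lemma bdry_apply (j : ℕ) (f : Chains k K (j+1)) (t : FaceJ K j) :
    bdry k K j f t = ∑ s : FaceJ K (j+1), f s * bdryElt k K j s t := by
  simp only [bdry, LinearMap.sum_apply, LinearMap.comp_apply, LinearMap.proj_apply,
    LinearMap.toSpanSingleton_apply, Finset.sum_apply, Pi.smul_apply, smul_eq_mul]

end TB
set_option synthInstance.maxHeartbeats 1000000
set_option maxHeartbeats 2000000
set_option linter.unusedSectionVars false
namespace TB
variable {V : Type*} [Fintype V] (k : Type*) [Field k] (K : SComplex V)

noncomputable def fdim (j : ℕ) : ℕ := Fintype.card (FaceJ K j)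

lemma finrank_chains (j : ℕ) : Module.finrank k (Chains k K j) = fdim K j :=
  Module.finrank_pi k

noncomputable def rk (j : ℕ) : ℕ := Module.finrank k (LinearMap.range (bdry k K j))

lemma isEmpty_faceJ {j : ℕ} (h : Fintype.card V < j) : IsEmpty (FaceJ K j) := by
  constructor
  rintro ⟨s, -, hcard⟩
  exact absurd (Finset.card_le_univ s) (by omega)

lemma rk_eq_zero {j : ℕ} (h : Fintype.card V < j + 1) : rk k K j = 0 := by
  have he := isEmpty_faceJ K h
  have : Subsingleton (Chains k K (j+1)) := by
    constructor; intro a b; funext t; exact (he.false t).elim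
  have : ∀ f : Chains k K (j+1), bdry k K j f = 0 := fun f => by
    rw [Subsingleton.elim f 0, map_zero]
  have hz : bdry k K j = 0 := LinearMap.ext fun f => this f
  rw [rk, hz, LinearMap.range_zero, finrank_bot]

lemma fdim_eq_zero {j : ℕ} (h : Fintype.card V < j) : fdim K j = 0 := by
  have := isEmpty_faceJ K h
  simp [fdim, Fintype.card_eq_zero]

lemma bdry_single (j : ℕ) (s : FaceJ K (j+1)) :
    bdry k K j (Pi.single s (1:k)) = bdryElt k K j s := by
  funext t
  rw [bdry_apply]
  rw [Finset.sum_eq_single s]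
  · simp
  · intro b _ hb
    rw [Pi.single_eq_of_ne hb, zero_mul]
  · intro hs; exact absurd (Finset.mem_univ s) hs

end TB
set_option synthInstance.maxHeartbeats 1000000
set_option maxHeartbeats 2000000
set_option linter.unusedSectionVars false
namespace TB
variable {V : Type*} [Fintype V]
noncomputable local instance (priority := high) inst_s1 : LinearOrder V := lo V
variable (k : Type*) [Field k] (K : SComplex V)

/-- number of elements of `s` below `y` (in the fixed well-order) -/
noncomputable def idx (s : Finset V) (y : V) : ℕ := (s.filter (fun w => w < y)).card

lemma bdryElt_apply' (j : ℕ) (s : FaceJ K (j+1)) (t : FaceJ K j) :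
    bdryElt k K j s t =
      if t.1 ⊆ s.1 then ∑ x ∈ s.1 \ t.1, (-1 : k) ^ idx s.1 x
      else 0 := bdryElt_apply k K j s t

lemma idx_erase (s : Finset V) (x y : V) (hx : x ∈ s) :
    idx s y = idx (s.erase x) y + (if x < y then 1 else 0) := by
  unfold idx
  rw [Finset.filter_erase]
  by_cases h : x < y
  · have hxf : x ∈ s.filter (fun w => w < y) := Finset.mem_filter.2 ⟨hx, h⟩
    rw [Finset.card_erase_of_mem hxf, if_pos h]
    have : 1 ≤ (s.filter (fun w => w < y)).card := Finset.card_pos.2 ⟨x, hxf⟩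
    omega
  · rw [Finset.erase_eq_of_notMem (s := s.filter (fun w => w < y)) (a := x)
      (fun hc => h (Finset.mem_filter.1 hc).2), if_neg h]
    omega

/-- the single-face boundary-of-boundary vanishes -/
lemma bdry_bdryElt (j : ℕ) (s : FaceJ K (j+2)) :
    bdry k K j (bdryElt k K (j+1) s) = 0 := by
  funext t
  rw [bdry_apply]
  show (∑ u : FaceJ K (j+1), bdryElt k K (j+1) s u * bdryElt k K j u t) = 0
  by_cases hts : t.1 ⊆ s.1
  · -- s \ t has exactly two elements x ≠ y
    have hcard : (s.1 \ t.1).card = 2 := by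
      rw [Finset.card_sdiff_of_subset hts, s.2.2, t.2.2]; omega
    obtain ⟨x, y, hxy, hset⟩ := Finset.card_eq_two.1 hcard
    have hxs : x ∈ s.1 \ t.1 := by rw [hset]; simp
    have hys : y ∈ s.1 \ t.1 := by rw [hset]; simp
    have hxs' : x ∈ s.1 := (Finset.mem_sdiff.1 hxs).1
    have hys' : y ∈ s.1 := (Finset.mem_sdiff.1 hys).1
    have hxt : x ∉ t.1 := (Finset.mem_sdiff.1 hxs).2
    have hyt : y ∉ t.1 := (Finset.mem_sdiff.1 hys).2
    have hu1f : s.1.erase x ∈ K.faces ∧ (s.1.erase x).card = j + 1 :=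
      ⟨K.down_closed s.2.1 (Finset.erase_subset _ _), by rw [Finset.card_erase_of_mem hxs', s.2.2]; omega⟩
    have hu2f : s.1.erase y ∈ K.faces ∧ (s.1.erase y).card = j + 1 :=
      ⟨K.down_closed s.2.1 (Finset.erase_subset _ _), by rw [Finset.card_erase_of_mem hys', s.2.2]; omega⟩
    set U₁ : FaceJ K (j+1) := ⟨s.1.erase x, hu1f⟩ with hU₁
    set U₂ : FaceJ K (j+1) := ⟨s.1.erase y, hu2f⟩ with hU₂
    have hUne : U₁ ≠ U₂ := by
      intro h
      rw [Subtype.ext_iff] at h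
      have hh : s.1.erase x = s.1.erase y := h
      have hx2 : x ∈ s.1.erase y := Finset.mem_erase.2 ⟨hxy, hxs'⟩
      rw [← hh] at hx2
      exact (Finset.notMem_erase x s.1) hx2
    have hsupp : ∀ u : FaceJ K (j+1), u ∉ ({U₁, U₂} : Finset (FaceJ K (j+1))) →
        bdryElt k K (j+1) s u * bdryElt k K j u t = 0 := by
      intro u hu
      by_cases hus : u.1 ⊆ s.1
      · by_cases htu : t.1 ⊆ u.1
        · exfalso
          -- then u = s.erase z with z ∈ {x,y}
          have hz : (s.1 \ u.1).card = 1 := by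
            rw [Finset.card_sdiff_of_subset hus, s.2.2, u.2.2]; omega
          obtain ⟨z, hzeq⟩ := Finset.card_eq_one.1 hz
          have hzmem : z ∈ s.1 \ t.1 := by
            have : z ∈ s.1 \ u.1 := by rw [hzeq]; simp
            exact Finset.mem_sdiff.2 ⟨(Finset.mem_sdiff.1 this).1,
              fun hc => (Finset.mem_sdiff.1 this).2 (htu hc)⟩
          have hueq : u.1 = s.1.erase z := by
            have h1 : u.1 = s.1 \ {z} := by rw [← hzeq, Finset.sdiff_sdiff_eq_self hus]
            rw [h1, Finset.sdiff_singleton_eq_erase]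
          rw [hset] at hzmem
          rcases Finset.mem_insert.1 hzmem with h | h
          · exact hu (Finset.mem_insert.2 (Or.inl (by apply Subtype.ext; rw [hueq, h])))
          · have := Finset.mem_singleton.1 h
            exact hu (Finset.mem_insert.2 (Or.inr (Finset.mem_singleton.2
              (by apply Subtype.ext; rw [hueq, this]))))
        · rw [bdryElt_apply' k K j u t, if_neg htu, mul_zero]
      · rw [bdryElt_apply' k K (j+1) s u, if_neg hus, zero_mul]
    rw [← Finset.sum_subset (Finset.subset_univ ({U₁, U₂} : Finset (FaceJ K (j+1))))
      (fun u _ hu => hsupp u hu)]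
    rw [Finset.sum_pair hUne]
    -- now evaluate the four bdryElt's
    have e1 : bdryElt k K (j+1) s U₁ = (-1 : k) ^ idx s.1 x := by
      rw [bdryElt_apply', if_pos (Finset.erase_subset _ _),
        Finset.sdiff_erase_self hxs', Finset.sum_singleton]
    have e2 : bdryElt k K (j+1) s U₂ = (-1 : k) ^ idx s.1 y := by
      rw [bdryElt_apply', if_pos (Finset.erase_subset _ _),
        Finset.sdiff_erase_self hys', Finset.sum_singleton]
    have htu1 : t.1 ⊆ s.1.erase x := fun w hw =>
      Finset.mem_erase.2 ⟨fun hc => hxt (hc ▸ hw), hts hw⟩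
    have htu2 : t.1 ⊆ s.1.erase y := fun w hw =>
      Finset.mem_erase.2 ⟨fun hc => hyt (hc ▸ hw), hts hw⟩
    have hd1 : s.1.erase x \ t.1 = {y} := by
      ext w
      simp only [Finset.mem_sdiff, Finset.mem_erase, Finset.mem_singleton]
      constructor
      · rintro ⟨⟨hwx, hws⟩, hwt⟩
        have : w ∈ s.1 \ t.1 := Finset.mem_sdiff.2 ⟨hws, hwt⟩
        rw [hset] at this
        rcases Finset.mem_insert.1 this with h | h
        · exact absurd h hwx
        · exact Finset.mem_singleton.1 h
      · rintro rfl
        exact ⟨⟨hxy.symm, hys'⟩, hyt⟩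
    have hd2 : s.1.erase y \ t.1 = {x} := by
      ext w
      simp only [Finset.mem_sdiff, Finset.mem_erase, Finset.mem_singleton]
      constructor
      · rintro ⟨⟨hwy, hws⟩, hwt⟩
        have : w ∈ s.1 \ t.1 := Finset.mem_sdiff.2 ⟨hws, hwt⟩
        rw [hset] at this
        rcases Finset.mem_insert.1 this with h | h
        · exact h
        · exact absurd (Finset.mem_singleton.1 h) hwy
      · rintro rfl
        exact ⟨⟨hxy, hxs'⟩, hxt⟩
    have e3 : bdryElt k K j U₁ t = (-1 : k) ^ idx (s.1.erase x) y := by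
      rw [bdryElt_apply', if_pos htu1]
      show (∑ w ∈ s.1.erase x \ t.1, (-1:k) ^ idx (s.1.erase x) w) = _
      rw [hd1, Finset.sum_singleton]
    have e4 : bdryElt k K j U₂ t = (-1 : k) ^ idx (s.1.erase y) x := by
      rw [bdryElt_apply', if_pos htu2]
      show (∑ w ∈ s.1.erase y \ t.1, (-1:k) ^ idx (s.1.erase y) w) = _
      rw [hd2, Finset.sum_singleton]
    rw [e1, e2, e3, e4]
    have h1 : idx s.1 y = idx (s.1.erase x) y + (if x < y then 1 else 0) := idx_erase _ _ _ hxs'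
    have h2 : idx s.1 x = idx (s.1.erase y) x + (if y < x then 1 else 0) := idx_erase _ _ _ hys'
    rcases lt_or_gt_of_ne hxy with hlt | hlt
    · rw [if_pos hlt] at h1
      rw [if_neg (not_lt.2 hlt.le)] at h2
      rw [h1, h2]
      ring
    · rw [if_neg (not_lt.2 hlt.le)] at h1
      rw [if_pos hlt] at h2
      rw [h1, h2]
      ring
  · apply Finset.sum_eq_zero
    intro u _
    by_cases hus : u.1 ⊆ s.1
    · by_cases htu : t.1 ⊆ u.1
      · exact absurd (htu.trans hus) hts
      · rw [bdryElt_apply' k K j u t, if_neg htu, mul_zero]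
    · rw [bdryElt_apply' k K (j+1) s u, if_neg hus, zero_mul]

lemma bdry_bdry (j : ℕ) : (bdry k K j).comp (bdry k K (j+1)) = 0 := by
  apply LinearMap.pi_ext'
  intro s
  apply LinearMap.ext
  intro a
  show bdry k K j (bdry k K (j+1) (Pi.single s a)) = 0
  have hb : ∃ b : Chains k K (j+2), b = Pi.single s (1:k) := ⟨_, rfl⟩
  obtain ⟨b, hbdef⟩ := hb
  have h1 : (Pi.single s a : Chains k K (j+2)) = a • b := by
    rw [hbdef]
    funext u
    by_cases h : u = s
    · subst h; simp
    · simp [Pi.single_eq_of_ne h]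
  have h2 : bdry k K (j+1) b = bdryElt k K (j+1) s := by rw [hbdef]; exact bdry_single k K (j+1) s
  rw [h1, map_smul, h2, map_smul, bdry_bdryElt, smul_zero]

end TB
set_option synthInstance.maxHeartbeats 1000000
set_option maxHeartbeats 2000000
set_option linter.unusedSectionVars false
namespace TB
variable {V : Type*} [Fintype V]
variable (k : Type*) [Field k] (K : SComplex V)

lemma bdries_le_cycles (j : ℕ) : bdries k K j ≤ cycles k K j := by
  cases j with
  | zero => exact le_top
  | succ j =>
    show LinearMap.range (bdry k K (j+1)) ≤ LinearMap.ker (bdry k K j)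
    rintro x ⟨y, rfl⟩
    have := congrFun (congrArg DFunLike.coe (bdry_bdry k K j)) y
    simpa using this

lemma bettiNum_add_rk (j : ℕ) :
    bettiNum k K j + rk k K j = Module.finrank k (cycles k K j) := by
  have hle := bdries_le_cycles k K j
  have h1 : Module.finrank k (Submodule.comap (cycles k K j).subtype (bdries k K j))
      = rk k K j := (Submodule.comapSubtypeEquivOfLe hle).finrank_eq
  rw [bettiNum, ← h1]
  exact Submodule.finrank_quotient_add_finrank _

lemma finrank_cycles_zero : Module.finrank k (cycles k K 0) = fdim K 0 := by
  show Module.finrank k (⊤ : Submodule k (Chains k K 0)) = _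
  rw [finrank_top, finrank_chains]

lemma finrank_cycles_succ (j : ℕ) :
    rk k K j + Module.finrank k (cycles k K (j+1)) = fdim K (j+1) := by
  show Module.finrank k (LinearMap.range (bdry k K j)) +
    Module.finrank k (LinearMap.ker (bdry k K j)) = _
  rw [LinearMap.finrank_range_add_finrank_ker, finrank_chains]

lemma totalBetti_formula :
    totalBetti k K + 2 * ∑ j ∈ Finset.range (Fintype.card V + 1), rk k K j
      = ∑ j ∈ Finset.range (Fintype.card V + 1), fdim K j := by
  set N := Fintype.card V
  have h1 : ∑ j ∈ Finset.range (N+1), (bettiNum k K j + rk k K j)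
      = ∑ j ∈ Finset.range (N+1), Module.finrank k (cycles k K j) :=
    Finset.sum_congr rfl fun j _ => bettiNum_add_rk k K j
  have h2 : ∑ j ∈ Finset.range (N+1), Module.finrank k (cycles k K j)
      = ∑ j ∈ Finset.range N, Module.finrank k (cycles k K (j+1)) + fdim K 0 := by
    rw [Finset.sum_range_succ']
    rw [finrank_cycles_zero]
  have h3 : ∑ j ∈ Finset.range N, (rk k K j + Module.finrank k (cycles k K (j+1)))
      = ∑ j ∈ Finset.range N, fdim K (j+1) :=
    Finset.sum_congr rfl fun j _ => finrank_cycles_succ k K j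
  have h4 : ∑ j ∈ Finset.range (N+1), fdim K j
      = ∑ j ∈ Finset.range N, fdim K (j+1) + fdim K 0 := Finset.sum_range_succ' _ _
  have h5 : ∑ j ∈ Finset.range (N+1), rk k K j
      = ∑ j ∈ Finset.range N, rk k K j + rk k K N := Finset.sum_range_succ _ _
  have h6 : rk k K N = 0 := rk_eq_zero k K (by omega)
  have e1 : totalBetti k K + ∑ j ∈ Finset.range (N+1), rk k K j
      = ∑ j ∈ Finset.range (N+1), Module.finrank k (cycles k K j) := by
    rw [← h1, totalBetti, Finset.sum_add_distrib]
  have e3 : ∑ j ∈ Finset.range N, rk k K j + ∑ j ∈ Finset.range N,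
      Module.finrank k (cycles k K (j+1)) = ∑ j ∈ Finset.range N, fdim K (j+1) := by
    rw [← h3, Finset.sum_add_distrib]
  omega

end TB
set_option synthInstance.maxHeartbeats 1000000
set_option maxHeartbeats 2000000
set_option linter.unusedSectionVars false
namespace TB
variable {V : Type*} [Fintype V]
noncomputable local instance (priority := high) inst_s1_2 : LinearOrder V := lo V
variable (k : Type*) [Field k] (K : SComplex V) (v : V)

lemma filter_card_erase (p : V → Prop) {x : V} {s : Finset V} (hx : x ∈ s) :
    (s.filter p).card = ((s.erase x).filter p).card + (if p x then 1 else 0) := by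
  rw [Finset.filter_erase]
  by_cases h : p x
  · have hxf : x ∈ s.filter p := Finset.mem_filter.2 ⟨hx, h⟩
    rw [Finset.card_erase_of_mem hxf, if_pos h]
    have : 1 ≤ (s.filter p).card := Finset.card_pos.2 ⟨x, hxf⟩
    omega
  · rw [Finset.erase_eq_of_notMem (s := s.filter p) (a := x)
      (fun hc => h (Finset.mem_filter.1 hc).2), if_neg h]
    omega

lemma mem_link_iff (hv : {v} ∈ K.faces) (s : Finset V) :
    s ∈ (K.link v).faces ↔ v ∉ s ∧ insert v s ∈ K.faces := by
  constructor
  · rintro (⟨h1, h2⟩ | h)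
    · exact ⟨h1, h2⟩
    · have : s = ∅ := h
      subst this
      exact ⟨Finset.notMem_empty v, by simpa using hv⟩
  · intro h; exact Or.inl h

lemma mem_delete_iff (s : Finset V) :
    s ∈ (K.delete v).faces ↔ s ∈ K.faces ∧ v ∉ s := Iff.rfl

lemma link_le_delete {s : Finset V} (h : s ∈ (K.link v).faces) : s ∈ (K.delete v).faces := by
  rcases h with ⟨h1, h2⟩ | h
  · exact ⟨K.down_closed h2 (Finset.subset_insert v s), h1⟩
  · have : s = ∅ := h
    subst this
    exact ⟨K.empty_mem, Finset.notMem_empty v⟩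

variable (hv : {v} ∈ K.faces)

/-- inclusion of deletion faces -/
def eA (j : ℕ) : FaceJ (K.delete v) j → FaceJ K j := fun s => ⟨s.1, s.2.1.1, s.2.2⟩

/-- faces of the link, shifted by inserting `v` -/
noncomputable def eL (hv : {v} ∈ K.faces) (j : ℕ) :
    FaceJ (K.link v) j → FaceJ K (j+1) := fun s =>
  ⟨insert v s.1, ((mem_link_iff K v hv s.1).1 s.2.1).2,
    by rw [Finset.card_insert_of_notMem ((mem_link_iff K v hv s.1).1 s.2.1).1, s.2.2]⟩

lemma eA_injective (j : ℕ) : Function.Injective (eA K v j) := by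
  intro a b h
  rw [Subtype.ext_iff] at h ⊢
  exact h

lemma eL_injective (j : ℕ) : Function.Injective (eL K v hv j) := by
  intro a b h
  apply Subtype.ext
  have h' : insert v a.1 = insert v b.1 := congrArg Subtype.val h
  have ha := ((mem_link_iff K v hv a.1).1 a.2.1).1
  have hb := ((mem_link_iff K v hv b.1).1 b.2.1).1
  have := congrArg (fun s => Finset.erase s v) h'
  simpa [Finset.erase_insert ha, Finset.erase_insert hb] using this

noncomputable def iotaA (j : ℕ) : Chains k (K.delete v) j →ₗ[k] Chains k K j :=
  Function.ExtendByZero.linearMap k (eA K v j)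

noncomputable def piA (j : ℕ) : Chains k K j →ₗ[k] Chains k (K.delete v) j :=
  LinearMap.funLeft k k (eA K v j)

noncomputable def iotaL (j : ℕ) : Chains k (K.link v) j →ₗ[k] Chains k K (j+1) :=
  Function.ExtendByZero.linearMap k (eL K v hv j)

noncomputable def piL (j : ℕ) : Chains k K (j+1) →ₗ[k] Chains k (K.link v) j :=
  LinearMap.funLeft k k (eL K v hv j)

/-- extension by zero sends basis vectors to basis vectors -/
lemma extend_single {α β : Type u} [DecidableEq α] [DecidableEq β] {e : α → β}
    (he : Function.Injective e) (a : α) (c : k) :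
    Function.ExtendByZero.linearMap k e (Pi.single a c) = (Pi.single (e a) c : β → k) := by
  funext w
  show Function.extend e (Pi.single a c) 0 w = _
  by_cases h : ∃ a', e a' = w
  · obtain ⟨a', rfl⟩ := h
    rw [he.extend_apply]
    by_cases h' : a' = a
    · subst h'; simp
    · rw [Pi.single_eq_of_ne h', Pi.single_eq_of_ne (fun hc => h' (he hc))]
  · rw [Function.extend_apply' _ _ _ h]
    have : w ≠ e a := fun hc => h ⟨a, hc.symm⟩
    rw [Pi.single_eq_of_ne this]
    rfl

/-- generic: equality of linear maps between function spaces via basis vectors -/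
lemma map_eq_on_basis {α β : Type*} [Fintype α] [DecidableEq α]
    {f g : (α → k) →ₗ[k] (β → k)} (h : ∀ a, f (Pi.single a 1) = g (Pi.single a 1)) :
    f = g := by
  apply LinearMap.pi_ext'
  intro a
  apply LinearMap.ext
  intro c
  show f (Pi.single a c) = g (Pi.single a c)
  have hb : ∃ b : α → k, b = Pi.single a 1 := ⟨_, rfl⟩
  obtain ⟨b, hbdef⟩ := hb
  have hs : (Pi.single a c : α → k) = c • b := by
    rw [hbdef]
    funext w
    by_cases hw : w = a
    · subst hw; simp
    · simp [Pi.single_eq_of_ne hw]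
  have hfb : f b = g b := by rw [hbdef]; exact h a
  rw [hs, map_smul, map_smul, hfb]

end TB
set_option synthInstance.maxHeartbeats 1000000
set_option maxHeartbeats 2000000
set_option linter.unusedSectionVars false
namespace TB
variable {V : Type*} [Fintype V]
noncomputable local instance (priority := high) inst_s1_3 : LinearOrder V := lo V
variable (k : Type*) [Field k] (K : SComplex V) (v : V) (hv : {v} ∈ K.faces)

noncomputable def sgn (v : V) (u : Finset V) : k := (-1) ^ ((u.filter (fun w => v < w)).card)

lemma neg_one_sq_pow (ct : ℕ) : ((-1 : k)^ct) * ((-1:k)^ct) = 1 := by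
  rw [← pow_add]
  exact Even.neg_one_pow ⟨ct, rfl⟩

lemma core_AA (j : ℕ) (s : FaceJ (K.delete v) (j+1)) (t : FaceJ (K.delete v) j) :
    bdryElt k K j (eA K v (j+1) s) (eA K v j t) = bdryElt k (K.delete v) j s t := rfl

lemma core_LA (j : ℕ) (s : FaceJ (K.delete v) (j+2)) (t : FaceJ (K.link v) j) :
    bdryElt k K (j+1) (eA K v (j+2) s) (eL K v hv j t) = 0 := by
  rw [bdryElt_apply', if_neg]
  intro hsub
  exact s.2.1.2 (hsub (Finset.mem_insert_self v t.1))

lemma core_LL (j : ℕ) (u : FaceJ (K.link v) (j+1)) (t : FaceJ (K.link v) j) :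
    bdryElt k K (j+1) (eL K v hv (j+1) u) (eL K v hv j t) =
      sgn k v t.1 * (sgn k v u.1 * bdryElt k (K.link v) j u t) := by
  have hu : v ∉ u.1 := ((mem_link_iff K v hv u.1).1 u.2.1).1
  have ht : v ∉ t.1 := ((mem_link_iff K v hv t.1).1 t.2.1).1
  by_cases h : t.1 ⊆ u.1
  · have hsub : insert v t.1 ⊆ insert v u.1 := Finset.insert_subset_insert v h
    have hsd : insert v u.1 \ insert v t.1 = u.1 \ t.1 := by
      ext w
      simp only [Finset.mem_sdiff, Finset.mem_insert, not_or]
      constructor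
      · rintro ⟨h1, h2, h3⟩
        rcases h1 with rfl | h1
        · exact absurd rfl h2
        · exact ⟨h1, h3⟩
      · rintro ⟨h1, h2⟩
        refine ⟨Or.inr h1, fun hc => ?_, h2⟩
        · subst hc; exact hu h1
    have hcard : (u.1 \ t.1).card = 1 := by
      rw [Finset.card_sdiff_of_subset h, u.2.2, t.2.2]; omega
    obtain ⟨x, hx⟩ := Finset.card_eq_one.1 hcard
    have hxu : x ∈ u.1 := by
      have : x ∈ u.1 \ t.1 := by rw [hx]; simp
      exact (Finset.mem_sdiff.1 this).1
    have hteq : t.1 = u.1.erase x := by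
      rw [← Finset.sdiff_singleton_eq_erase, ← hx, Finset.sdiff_sdiff_eq_self h]
    show (if insert v t.1 ⊆ insert v u.1 then
        ∑ x ∈ insert v u.1 \ insert v t.1, (-1:k) ^ idx (insert v u.1) x else 0) = _
    rw [if_pos hsub, hsd, hx, Finset.sum_singleton]
    have hidx : idx (insert v u.1) x = idx u.1 x + (if v < x then 1 else 0) := by
      have h1 := filter_card_erase (p := fun w => w < x) (Finset.mem_insert_self v u.1)
      rw [Finset.erase_insert hu] at h1
      exact h1
    have hcu : (u.1.filter (fun w => v < w)).card
        = ((t.1).filter (fun w => v < w)).card + (if v < x then 1 else 0) := by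
      have h1 := filter_card_erase (p := fun w => v < w) hxu
      rw [← hteq] at h1
      exact h1
    rw [bdryElt_apply', if_pos h, hx, Finset.sum_singleton]
    unfold sgn
    rw [hidx, hcu]
    have key := neg_one_sq_pow k ((t.1.filter (fun w => v < w)).card)
    rw [pow_add, pow_add]
    linear_combination (-((-1:k) ^ (if v < x then 1 else 0) * (-1:k) ^ (idx u.1 x))) * key
  · have hnsub : ¬ (insert v t.1 ⊆ insert v u.1) := by
      intro hc
      apply h
      intro w hw
      rcases Finset.mem_insert.1 (hc (Finset.mem_insert_of_mem hw)) with rfl | h2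
      · exact absurd hw ht
      · exact h2
    show (if insert v t.1 ⊆ insert v u.1 then
        ∑ x ∈ insert v u.1 \ insert v t.1, (-1:k) ^ idx (insert v u.1) x else 0) = _
    rw [if_neg hnsub, bdryElt_apply', if_neg h, mul_zero, mul_zero]

lemma core_AL (j : ℕ) (u : FaceJ (K.link v) j) (t : FaceJ (K.delete v) j) :
    bdryElt k K j (eL K v hv j u) (eA K v j t) =
      if t.1 = u.1 then (-1:k) ^ (idx u.1 v) else 0 := by
  have hu : v ∉ u.1 := ((mem_link_iff K v hv u.1).1 u.2.1).1
  have ht : v ∉ t.1 := t.2.1.2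
  by_cases h : t.1 = u.1
  · have hsub : t.1 ⊆ insert v u.1 := by rw [h]; exact Finset.subset_insert v u.1
    have hsd : insert v u.1 \ t.1 = {v} := by
      rw [h]
      ext w
      simp only [Finset.mem_sdiff, Finset.mem_insert, Finset.mem_singleton]
      constructor
      · rintro ⟨rfl | h1, h2⟩
        · rfl
        · exact absurd h1 h2
      · rintro rfl
        exact ⟨Or.inl rfl, hu⟩
    show (if t.1 ⊆ insert v u.1 then
        ∑ x ∈ insert v u.1 \ t.1, (-1:k) ^ idx (insert v u.1) x else 0) = _
    rw [if_pos hsub, hsd, Finset.sum_singleton, if_pos h]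
    congr 1
    show (Finset.filter (fun w => w < v) (insert v u.1)).card = _
    have h1 := filter_card_erase (p := fun w => w < v) (Finset.mem_insert_self v u.1)
    rw [Finset.erase_insert hu, if_neg (lt_irrefl v)] at h1
    rw [h1]
    rfl
  · have hnsub : ¬ (t.1 ⊆ insert v u.1) := by
      intro hc
      apply h
      have hsub' : t.1 ⊆ u.1 := by
        intro w hw
        rcases Finset.mem_insert.1 (hc hw) with rfl | h2
        · exact absurd hw ht
        · exact h2
      exact Finset.eq_of_subset_of_card_le hsub' (by rw [u.2.2, t.2.2])
    show (if t.1 ⊆ insert v u.1 then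
        ∑ x ∈ insert v u.1 \ t.1, (-1:k) ^ idx (insert v u.1) x else 0) = _
    rw [if_neg hnsub, if_neg h]

end TB
set_option synthInstance.maxHeartbeats 1000000
set_option maxHeartbeats 2000000
set_option linter.unusedSectionVars false
namespace TB
variable {V : Type*} [Fintype V]
noncomputable local instance (priority := high) inst_s1_4 : LinearOrder V := lo V
variable (k : Type*) [Field k] (K : SComplex V) (v : V) (hv : {v} ∈ K.faces)

noncomputable def diagSgn (j : ℕ) : Chains k (K.link v) j →ₗ[k] Chains k (K.link v) j where
  toFun := fun g t => sgn k v t.1 * g t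
  map_add' := by intro g h; funext t; simp [mul_add]
  map_smul' := by intro c g; funext t; simp only [Pi.smul_apply, smul_eq_mul, RingHom.id_apply]; ring

lemma diagSgn_diagSgn (j : ℕ) (g : Chains k (K.link v) j) :
    diagSgn k K v j (diagSgn k K v j g) = g := by
  funext t
  show sgn k v t.1 * (sgn k v t.1 * g t) = g t
  rw [← mul_assoc, sgn, neg_one_sq_pow, one_mul]

noncomputable def mapAL (j : ℕ) : Chains k (K.link v) j →ₗ[k] Chains k (K.delete v) j where
  toFun := fun g t => if h : t.1 ∈ (K.link v).faces then
    ((-1:k) ^ (idx t.1 v)) * g ⟨t.1, h, t.2.2⟩ else 0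
  map_add' := by
    intro g h; funext t
    by_cases ht : t.1 ∈ (K.link v).faces
    · simp only [dif_pos ht, Pi.add_apply]; ring
    · simp only [dif_neg ht, Pi.add_apply, add_zero]
  map_smul' := by
    intro c g; funext t
    by_cases ht : t.1 ∈ (K.link v).faces
    · simp only [dif_pos ht, Pi.smul_apply, smul_eq_mul, RingHom.id_apply]; ring
    · simp only [dif_neg ht, Pi.smul_apply, smul_eq_mul, RingHom.id_apply, mul_zero]

lemma mapAL_injective (j : ℕ) : Function.Injective (mapAL k K v j) := by
  rw [injective_iff_map_eq_zero]
  intro g hg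
  funext u
  have hu : u.1 ∈ (K.delete v).faces := link_le_delete K v u.2.1
  have := congrFun hg ⟨u.1, hu, u.2.2⟩
  simp only [mapAL, LinearMap.coe_mk, AddHom.coe_mk] at this
  rw [dif_pos u.2.1] at this
  have hne : ((-1:k) ^ (idx u.1 v)) ≠ 0 := by
    apply pow_ne_zero
    exact neg_ne_zero.2 one_ne_zero
  have hz : g ⟨u.1, u.2.1, u.2.2⟩ = 0 := by
    rcases mul_eq_zero.1 this with h | h
    · exact absurd h hne
    · exact h
  have : u = (⟨u.1, u.2.1, u.2.2⟩ : FaceJ (K.link v) j) := Subtype.ext rfl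
  rw [this]
  exact hz

lemma compAA (j : ℕ) :
    (piA k K v j) ∘ₗ ((bdry k K j) ∘ₗ (iotaA k K v (j+1))) = bdry k (K.delete v) j := by
  apply map_eq_on_basis
  intro s
  funext t
  show piA k K v j (bdry k K j (iotaA k K v (j+1) (Pi.single s 1))) t = _
  rw [iotaA, extend_single k (eA_injective K v (j+1)), bdry_single]
  show bdryElt k K j (eA K v (j+1) s) (eA K v j t) = _
  rw [core_AA, bdry_single]

lemma compLA (j : ℕ) :
    (piL k K v hv j) ∘ₗ ((bdry k K (j+1)) ∘ₗ (iotaA k K v (j+2))) = 0 := by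
  apply map_eq_on_basis
  intro s
  funext t
  show piL k K v hv j (bdry k K (j+1) (iotaA k K v (j+2) (Pi.single s 1))) t = _
  rw [iotaA, extend_single k (eA_injective K v (j+2)), bdry_single]
  show bdryElt k K (j+1) (eA K v (j+2) s) (eL K v hv j t) = _
  rw [core_LA]
  rfl

lemma compLL (j : ℕ) :
    (piL k K v hv j) ∘ₗ ((bdry k K (j+1)) ∘ₗ (iotaL k K v hv (j+1)))
      = (diagSgn k K v j) ∘ₗ ((bdry k (K.link v) j) ∘ₗ (diagSgn k K v (j+1))) := by
  apply map_eq_on_basis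
  intro u
  funext t
  show piL k K v hv j (bdry k K (j+1) (iotaL k K v hv (j+1) (Pi.single u 1))) t = _
  rw [iotaL, extend_single k (eL_injective K v hv (j+1)), bdry_single]
  show bdryElt k K (j+1) (eL K v hv (j+1) u) (eL K v hv j t) = _
  rw [core_LL]
  -- now compute RHS
  obtain ⟨b, hbdef⟩ : ∃ b : Chains k (K.link v) (j+1), b = Pi.single u (1:k) := ⟨_, rfl⟩
  rw [← hbdef]
  have hrhs : diagSgn k K v (j+1) b = sgn k v u.1 • b := by
    rw [hbdef]
    funext w
    simp only [diagSgn, LinearMap.coe_mk, AddHom.coe_mk, Pi.smul_apply, smul_eq_mul]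
    by_cases hw : w = u
    · subst hw; rfl
    · rw [Pi.single_eq_of_ne hw, mul_zero, mul_zero]
  have hbd : bdry k (K.link v) j b = bdryElt k (K.link v) j u := by
    rw [hbdef]; exact bdry_single k (K.link v) j u
  rw [LinearMap.comp_apply, LinearMap.comp_apply, hrhs, map_smul, map_smul, hbd]
  show _ = (sgn k v u.1 • (diagSgn k K v j (bdryElt k (K.link v) j u))) t
  show _ = sgn k v u.1 * (sgn k v t.1 * (bdryElt k (K.link v) j u) t)
  ring

lemma compAL (j : ℕ) :
    (piA k K v j) ∘ₗ ((bdry k K j) ∘ₗ (iotaL k K v hv j)) = mapAL k K v j := by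
  apply map_eq_on_basis
  intro u
  funext t
  show piA k K v j (bdry k K j (iotaL k K v hv j (Pi.single u 1))) t = _
  rw [iotaL, extend_single k (eL_injective K v hv j), bdry_single]
  show bdryElt k K j (eL K v hv j u) (eA K v j t) = mapAL k K v j (Pi.single u 1) t
  rw [core_AL]
  obtain ⟨b, hbdef⟩ : ∃ b : Chains k (K.link v) j, b = Pi.single u (1:k) := ⟨_, rfl⟩
  rw [← hbdef]
  show _ = if h : t.1 ∈ (K.link v).faces then
    ((-1:k) ^ (idx t.1 v)) * b ⟨t.1, h, t.2.2⟩ else 0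
  by_cases h : t.1 = u.1
  · have htl : t.1 ∈ (K.link v).faces := h ▸ u.2.1
    rw [if_pos h, dif_pos htl]
    have hh : (⟨t.1, htl, t.2.2⟩ : FaceJ (K.link v) j) = u := Subtype.ext h
    rw [hh, hbdef, Pi.single_eq_same, mul_one, h]
  · rw [if_neg h]
    by_cases htl : t.1 ∈ (K.link v).faces
    · rw [dif_pos htl]
      have hh : (⟨t.1, htl, t.2.2⟩ : FaceJ (K.link v) j) ≠ u := fun hc => h (congrArg Subtype.val hc)
      rw [hbdef, Pi.single_eq_of_ne hh, mul_zero]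
    · rw [dif_neg htl]

end TB
set_option synthInstance.maxHeartbeats 1000000
set_option maxHeartbeats 2000000
set_option linter.unusedSectionVars false
namespace TB
variable {k : Type*} [Field k]
variable {C1 C2 A1 A2 L1 L2 : Type*}
  [AddCommGroup C1] [Module k C1] [AddCommGroup C2] [Module k C2]
  [AddCommGroup A1] [Module k A1] [AddCommGroup A2] [Module k A2]
  [AddCommGroup L1] [Module k L1] [AddCommGroup L2] [Module k L2]

lemma rank_comp_le [FiniteDimensional k C2] (π : C2 →ₗ[k] L2) (f : C1 →ₗ[k] C2) :
    Module.finrank k (LinearMap.range (π ∘ₗ f)) ≤ Module.finrank k (LinearMap.range f) := by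
  rw [LinearMap.range_comp]
  exact Submodule.finrank_map_le π (LinearMap.range f)

lemma rank_comp_le_left [FiniteDimensional k C2] (f : C1 →ₗ[k] C2) (ι : A1 →ₗ[k] C1) :
    Module.finrank k (LinearMap.range (f ∘ₗ ι)) ≤ Module.finrank k (LinearMap.range f) :=
  Submodule.finrank_mono (LinearMap.range_comp_le_range ι f)

lemma rank_sandwich_le [FiniteDimensional k C2] [FiniteDimensional k L2]
    (π : C2 →ₗ[k] L2) (f : C1 →ₗ[k] C2) (ι : A1 →ₗ[k] C1) :
    Module.finrank k (LinearMap.range (π ∘ₗ (f ∘ₗ ι)))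
      ≤ Module.finrank k (LinearMap.range f) :=
  le_trans (rank_comp_le π (f ∘ₗ ι)) (rank_comp_le_left f ι)

lemma rank_split [FiniteDimensional k C2] [FiniteDimensional k A2] [FiniteDimensional k L2]
    (f : C1 →ₗ[k] C2) (ι₁ : A1 →ₗ[k] C1) (π₁ : C2 →ₗ[k] A2)
    (ι₂ : L1 →ₗ[k] C1) (π₂ : C2 →ₗ[k] L2)
    (h0 : π₂ ∘ₗ (f ∘ₗ ι₁) = 0) :
    Module.finrank k (LinearMap.range (π₁ ∘ₗ (f ∘ₗ ι₁)))
      + Module.finrank k (LinearMap.range (π₂ ∘ₗ (f ∘ₗ ι₂)))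
      ≤ Module.finrank k (LinearMap.range f) := by
  set W := LinearMap.range f with hW
  have hrn : Module.finrank k (LinearMap.range (π₂.domRestrict W))
      + Module.finrank k (LinearMap.ker (π₂.domRestrict W)) = Module.finrank k W :=
    LinearMap.finrank_range_add_finrank_ker (π₂.domRestrict W)
  have hrange : LinearMap.range (π₂.domRestrict W) = Submodule.map π₂ W := by
    rw [LinearMap.range_domRestrict]
  have hker : LinearMap.ker (π₂.domRestrict W) = Submodule.comap W.subtype (LinearMap.ker π₂) :=
    LinearMap.ker_domRestrict W π₂
  -- bound 1
  have b1 : Module.finrank k (LinearMap.range (π₂ ∘ₗ (f ∘ₗ ι₂)))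
      ≤ Module.finrank k (Submodule.map π₂ W) := by
    rw [LinearMap.range_comp]
    exact Submodule.finrank_mono (Submodule.map_mono (LinearMap.range_comp_le_range ι₂ f))
  -- bound 2
  have hS1 : LinearMap.range (f ∘ₗ ι₁) ≤ LinearMap.ker π₂ := LinearMap.range_le_ker_iff.2 h0
  have hS2 : LinearMap.range (f ∘ₗ ι₁) ≤ W := LinearMap.range_comp_le_range ι₁ f
  have hcomap : Module.finrank k (Submodule.comap W.subtype (LinearMap.ker π₂))
      = Module.finrank k (W ⊓ LinearMap.ker π₂ : Submodule k C2) := by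
    rw [← Submodule.map_comap_subtype]
    exact (Submodule.equivMapOfInjective W.subtype (Submodule.injective_subtype W)
      (Submodule.comap W.subtype (LinearMap.ker π₂))).finrank_eq
  have b2 : Module.finrank k (LinearMap.range (π₁ ∘ₗ (f ∘ₗ ι₁)))
      ≤ Module.finrank k (Submodule.comap W.subtype (LinearMap.ker π₂)) := by
    rw [hcomap, LinearMap.range_comp]
    exact le_trans (Submodule.finrank_map_le π₁ _) (Submodule.finrank_mono (le_inf hS2 hS1))
  have : Module.finrank k (Submodule.map π₂ W)
      + Module.finrank k (Submodule.comap W.subtype (LinearMap.ker π₂))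
      = Module.finrank k W := by rw [← hrange, ← hker]; exact hrn
  omega

end TB
set_option synthInstance.maxHeartbeats 1000000
set_option maxHeartbeats 2000000
set_option linter.unusedSectionVars false
namespace TB
variable {V : Type*} [Fintype V]
noncomputable local instance (priority := high) inst_s1_5 : LinearOrder V := lo V
variable (k : Type*) [Field k] (K : SComplex V) (v : V)

lemma rank_diag_conj (j j' : ℕ) (g : Chains k (K.link v) j' →ₗ[k] Chains k (K.link v) j) :
    Module.finrank k (LinearMap.range
        ((diagSgn k K v j) ∘ₗ (g ∘ₗ (diagSgn k K v j'))))
      = Module.finrank k (LinearMap.range g) := by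
  apply le_antisymm
  · exact rank_sandwich_le _ _ _
  · have hgeq : g = (diagSgn k K v j) ∘ₗ
        (((diagSgn k K v j) ∘ₗ (g ∘ₗ (diagSgn k K v j'))) ∘ₗ (diagSgn k K v j')) := by
      apply LinearMap.ext
      intro x
      show g x = diagSgn k K v j (diagSgn k K v j (g (diagSgn k K v j' (diagSgn k K v j' x))))
      rw [diagSgn_diagSgn, diagSgn_diagSgn]
    calc Module.finrank k (LinearMap.range g)
        = Module.finrank k (LinearMap.range ((diagSgn k K v j) ∘ₗ
            (((diagSgn k K v j) ∘ₗ (g ∘ₗ (diagSgn k K v j'))) ∘ₗ (diagSgn k K v j')))) := by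
          rw [← hgeq]
      _ ≤ _ := rank_sandwich_le _ _ _

lemma rk_succ_ge (hv : {v} ∈ K.faces) (j : ℕ) :
    rk k (K.delete v) (j+1) + rk k (K.link v) j ≤ rk k K (j+1) := by
  have h := rank_split (bdry k K (j+1)) (iotaA k K v (j+2)) (piA k K v (j+1))
    (iotaL k K v hv (j+1)) (piL k K v hv j) (compLA k K v hv j)
  rw [compAA, compLL, rank_diag_conj] at h
  exact h

lemma rk_zero_ge : rk k (K.delete v) 0 ≤ rk k K 0 := by
  have h := rank_sandwich_le (piA k K v 0) (bdry k K 0) (iotaA k K v 1)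
  rw [compAA] at h
  exact h

lemma rk_cone_ge (hv : {v} ∈ K.faces) (j : ℕ) : fdim (K.link v) j ≤ rk k K j := by
  have h := rank_sandwich_le (piA k K v j) (bdry k K j) (iotaL k K v hv j)
  rw [compAL] at h
  rwa [LinearMap.finrank_range_of_inj (mapAL_injective k K v j), finrank_chains] at h

/-- faces of `K` of positive dimension split: those avoiding `v` and those containing it -/
noncomputable def faceSplitEquiv (hv : {v} ∈ K.faces) (j : ℕ) :
    FaceJ K (j+1) ≃ (FaceJ (K.delete v) (j+1)) ⊕ (FaceJ (K.link v) j) where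
  toFun s :=
    if h : v ∈ s.1 then
      Sum.inr ⟨s.1.erase v, by
        rw [mem_link_iff K v hv]
        exact ⟨Finset.notMem_erase v s.1, by rw [Finset.insert_erase h]; exact s.2.1⟩,
        by rw [Finset.card_erase_of_mem h, s.2.2]; omega⟩
    else
      Sum.inl ⟨s.1, ⟨s.2.1, h⟩, s.2.2⟩
  invFun := Sum.elim (fun a => eA K v (j+1) a) (fun u => eL K v hv j u)
  left_inv := by
    intro s
    dsimp only
    by_cases h : v ∈ s.1
    · rw [dif_pos h]
      apply Subtype.ext
      show insert v (s.1.erase v) = s.1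
      exact Finset.insert_erase h
    · rw [dif_neg h]
      rfl
  right_inv := by
    rintro (a | u)
    · have hva : v ∉ (eA K v (j+1) a).1 := a.2.1.2
      dsimp only [Sum.elim_inl]
      rw [dif_neg hva]
      rfl
    · have hvu : v ∈ (eL K v hv j u).1 := Finset.mem_insert_self v u.1
      have hvu' : v ∉ u.1 := ((mem_link_iff K v hv u.1).1 u.2.1).1
      dsimp only [Sum.elim_inr]
      rw [dif_pos hvu]
      congr 1
      apply Subtype.ext
      show (insert v u.1).erase v = u.1
      exact Finset.erase_insert hvu'

lemma fdim_split (hv : {v} ∈ K.faces) (j : ℕ) :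
    fdim K (j+1) = fdim (K.delete v) (j+1) + fdim (K.link v) j := by
  rw [fdim, Fintype.card_congr (faceSplitEquiv K v hv j), Fintype.card_sum]
  rfl

lemma fdim_zero_split : fdim K 0 = fdim (K.delete v) 0 := by
  apply Fintype.card_congr
  apply Equiv.subtypeEquivRight
  intro s
  constructor
  · rintro ⟨h1, h2⟩
    have : s = ∅ := Finset.card_eq_zero.1 h2
    subst this
    exact ⟨⟨h1, Finset.notMem_empty v⟩, h2⟩
  · rintro ⟨h1, h2⟩
    exact ⟨h1.1, h2⟩

lemma fdim_link_top (hv : {v} ∈ K.faces) : fdim (K.link v) (Fintype.card V) = 0 := by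
  have : IsEmpty (FaceJ (K.link v) (Fintype.card V)) := by
    constructor
    rintro ⟨s, hs, hcard⟩
    have hvs := ((mem_link_iff K v hv s).1 hs).1
    have hc : (insert v s).card = Fintype.card V + 1 := by
      rw [Finset.card_insert_of_notMem hvs, hcard]
    have hle := Finset.card_le_univ (insert v s)
    rw [hc] at hle
    have : (Finset.univ : Finset V).card = Fintype.card V := Finset.card_univ
    omega
  simp [fdim, Fintype.card_eq_zero]

lemma sum_fdim_split (hv : {v} ∈ K.faces) :
    ∑ j ∈ Finset.range (Fintype.card V + 1), fdim K j
      = ∑ j ∈ Finset.range (Fintype.card V + 1), fdim (K.delete v) j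
        + ∑ j ∈ Finset.range (Fintype.card V + 1), fdim (K.link v) j := by
  set N := Fintype.card V
  have h1 : ∑ j ∈ Finset.range (N + 1), fdim K j
      = ∑ j ∈ Finset.range N, fdim K (j+1) + fdim K 0 := Finset.sum_range_succ' _ _
  have h2 : ∑ j ∈ Finset.range (N + 1), fdim (K.delete v) j
      = ∑ j ∈ Finset.range N, fdim (K.delete v) (j+1) + fdim (K.delete v) 0 :=
    Finset.sum_range_succ' _ _
  have h3 : ∑ j ∈ Finset.range (N + 1), fdim (K.link v) j
      = ∑ j ∈ Finset.range N, fdim (K.link v) j + fdim (K.link v) N :=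
    Finset.sum_range_succ _ _
  have h4 : fdim (K.link v) N = 0 := fdim_link_top K v hv
  have h5 : ∑ j ∈ Finset.range N, fdim K (j+1)
      = ∑ j ∈ Finset.range N, (fdim (K.delete v) (j+1) + fdim (K.link v) j) :=
    Finset.sum_congr rfl fun j _ => fdim_split K v hv j
  rw [Finset.sum_add_distrib] at h5
  have h6 := fdim_zero_split K v
  omega

lemma sum_rk_split (hv : {v} ∈ K.faces) :
    ∑ j ∈ Finset.range (Fintype.card V + 1), rk k (K.delete v) j
      + ∑ j ∈ Finset.range (Fintype.card V + 1), rk k (K.link v) j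
      ≤ ∑ j ∈ Finset.range (Fintype.card V + 1), rk k K j := by
  set N := Fintype.card V
  have h1 : ∑ j ∈ Finset.range (N + 1), rk k K j
      = ∑ j ∈ Finset.range N, rk k K (j+1) + rk k K 0 := Finset.sum_range_succ' _ _
  have h2 : ∑ j ∈ Finset.range (N + 1), rk k (K.delete v) j
      = ∑ j ∈ Finset.range N, rk k (K.delete v) (j+1) + rk k (K.delete v) 0 :=
    Finset.sum_range_succ' _ _
  have h3 : ∑ j ∈ Finset.range (N + 1), rk k (K.link v) j
      = ∑ j ∈ Finset.range N, rk k (K.link v) j + rk k (K.link v) N :=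
    Finset.sum_range_succ _ _
  have h4 : rk k (K.link v) N = 0 := rk_eq_zero k (K.link v) (by omega)
  have h5 : ∑ j ∈ Finset.range N, (rk k (K.delete v) (j+1) + rk k (K.link v) j)
      ≤ ∑ j ∈ Finset.range N, rk k K (j+1) :=
    Finset.sum_le_sum fun j _ => rk_succ_ge k K v hv j
  rw [Finset.sum_add_distrib] at h5
  have h6 := rk_zero_ge k K v
  omega

theorem meshulam (hv : {v} ∈ K.faces) :
    totalBetti k K ≤ totalBetti k (K.delete v) + totalBetti k (K.link v) := by
  have hK := totalBetti_formula k K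
  have hA := totalBetti_formula k (K.delete v)
  have hL := totalBetti_formula k (K.link v)
  have hF := sum_fdim_split K v hv
  have hR := sum_rk_split k K v hv
  omega

theorem cone_totalBetti_eq_zero (hc : ∀ s ∈ K.faces, insert v s ∈ K.faces) :
    totalBetti k K = 0 := by
  have hv : {v} ∈ K.faces := by
    have := hc ∅ K.empty_mem
    simpa using this
  have hfaces : (K.delete v).faces = (K.link v).faces := by
    ext s
    rw [mem_delete_iff, mem_link_iff K v hv]
    constructor
    · rintro ⟨h1, h2⟩
      exact ⟨h2, hc s h1⟩
    · rintro ⟨h1, h2⟩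
      exact ⟨K.down_closed h2 (Finset.subset_insert v s), h1⟩
  have hAL : ∀ j, fdim (K.delete v) j = fdim (K.link v) j := by
    intro j
    apply Fintype.card_congr
    apply Equiv.subtypeEquivRight
    intro s
    rw [hfaces]
  have hK := totalBetti_formula k K
  have hF := sum_fdim_split K v hv
  have hFA : ∑ j ∈ Finset.range (Fintype.card V + 1), fdim (K.delete v) j
      = ∑ j ∈ Finset.range (Fintype.card V + 1), fdim (K.link v) j :=
    Finset.sum_congr rfl fun j _ => hAL j
  have hR : ∑ j ∈ Finset.range (Fintype.card V + 1), fdim (K.link v) j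
      ≤ ∑ j ∈ Finset.range (Fintype.card V + 1), rk k K j :=
    Finset.sum_le_sum fun j _ => rk_cone_ge k K v hv j
  omega

end TB
set_option synthInstance.maxHeartbeats 1000000
set_option maxHeartbeats 2000000
set_option linter.unusedSectionVars false
namespace TB
variable {V : Type*} [Fintype V]
variable (k : Type*) [Field k] (G : SimpleGraph V)

lemma scomplex_ext {K L : SComplex V} (h : K.faces = L.faces) : K = L := by
  cases K; cases L; congr

/-- the independence complex of `G` restricted to the vertex set `A` -/
def IC (A : Finset V) : SComplex V where
  faces := {s | s ⊆ A ∧ ∀ ⦃x⦄, x ∈ s → ∀ ⦃y⦄, y ∈ s → ¬ G.Adj x y}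
  empty_mem := ⟨Finset.empty_subset A, by intro x hx; simp at hx⟩
  down_closed := by
    intro s t hs hts
    exact ⟨hts.trans hs.1, fun x hx y hy => hs.2 (hts hx) (hts hy)⟩

lemma mem_IC_iff (A : Finset V) (s : Finset V) :
    s ∈ (IC G A).faces ↔ s ⊆ A ∧ ∀ ⦃x⦄, x ∈ s → ∀ ⦃y⦄, y ∈ s → ¬ G.Adj x y := Iff.rfl

lemma IC_univ : IC G Finset.univ = indComplex G := by
  apply scomplex_ext
  ext s
  simp [mem_IC_iff, indComplex, Finset.subset_univ]

lemma single_mem_IC {A : Finset V} {u : V} (hu : u ∈ A) : {u} ∈ (IC G A).faces := by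
  refine ⟨Finset.singleton_subset_iff.2 hu, ?_⟩
  intro x hx y hy
  rw [Finset.mem_singleton] at hx hy
  subst hx; subst hy
  exact G.loopless.irrefl _

lemma delete_IC (A : Finset V) (u : V) : (IC G A).delete u = IC G (A.erase u) := by
  apply scomplex_ext
  ext s
  constructor
  · rintro ⟨⟨h1, h2⟩, h3⟩
    exact ⟨fun x hx => Finset.mem_erase.2 ⟨fun hc => h3 (hc ▸ hx), h1 hx⟩, h2⟩
  · rintro ⟨h1, h2⟩
    refine ⟨⟨fun x hx => (Finset.mem_erase.1 (h1 hx)).2, h2⟩, fun hc => ?_⟩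
    exact (Finset.mem_erase.1 (h1 hc)).1 rfl

lemma link_IC (A : Finset V) (u : V) (hu : u ∈ A) :
    (IC G A).link u = IC G (A.filter (fun w => ¬(w = u ∨ G.Adj u w))) := by
  apply scomplex_ext
  ext s
  rw [mem_link_iff (IC G A) u (single_mem_IC G hu) s]
  constructor
  · rintro ⟨h1, h2, h3⟩
    constructor
    · intro w hw
      refine Finset.mem_filter.2 ⟨h2 (Finset.mem_insert_of_mem hw), ?_⟩
      push_neg
      constructor
      · intro hc; exact h1 (hc ▸ hw)
      · exact h3 (Finset.mem_insert_self u s) (Finset.mem_insert_of_mem hw)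
    · intro x hx y hy
      exact h3 (Finset.mem_insert_of_mem hx) (Finset.mem_insert_of_mem hy)
  · rintro ⟨h1, h2⟩
    have hnot : ∀ w ∈ s, ¬(w = u ∨ G.Adj u w) := fun w hw =>
      (Finset.mem_filter.1 (h1 hw)).2
    have hus : u ∉ s := fun hc => (hnot u hc) (Or.inl rfl)
    refine ⟨hus, ?_, ?_⟩
    · intro w hw
      rcases Finset.mem_insert.1 hw with rfl | hw'
      · exact hu
      · exact (Finset.mem_filter.1 (h1 hw')).1
    · intro x hx y hy
      rcases Finset.mem_insert.1 hx with rfl | hx' <;>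
        rcases Finset.mem_insert.1 hy with h | hy'
      · subst h; exact G.loopless.irrefl _
      · exact fun hc => (hnot y hy') (Or.inr hc)
      · subst h
        exact fun hc => (hnot x hx') (Or.inr hc.symm)
      · exact h2 hx' hy'

lemma rk_eq_zero' {K : SComplex V} {j : ℕ} (he : IsEmpty (FaceJ K (j+1))) :
    rk k K j = 0 := by
  have : Subsingleton (Chains k K (j+1)) := by
    constructor; intro a b; funext t; exact (he.false t).elim
  have hz : bdry k K j = 0 := LinearMap.ext fun f => by
    rw [Subsingleton.elim f 0, map_zero]
    rfl
  rw [rk, hz, LinearMap.range_zero, finrank_bot]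

lemma totalBetti_of_faces_eq_empty {K : SComplex V} (h : K.faces = {∅}) :
    totalBetti k K = 1 := by
  have hf0 : fdim K 0 = 1 := by
    rw [fdim, Fintype.card_eq_one_iff]
    refine ⟨⟨∅, by rw [h]; rfl, Finset.card_empty⟩, ?_⟩
    rintro ⟨s, hs, hcard⟩
    apply Subtype.ext
    have : s = ∅ := by rw [h] at hs; exact hs
    simp [this]
  have hfs : ∀ j : ℕ, fdim K (j+1) = 0 := by
    intro j
    have : IsEmpty (FaceJ K (j+1)) := by
      constructor
      rintro ⟨s, hs, hcard⟩
      rw [h] at hs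
      have : s = ∅ := hs
      subst this
      simp at hcard
    simp [fdim, Fintype.card_eq_zero]
  have hrk : ∀ j : ℕ, rk k K j = 0 := by
    intro j
    apply rk_eq_zero'
    constructor
    rintro ⟨s, hs, hcard⟩
    rw [h] at hs
    have : s = ∅ := hs
    subst this
    simp at hcard
  have hform := totalBetti_formula k K
  set N := Fintype.card V
  have h1 : ∑ j ∈ Finset.range (N+1), fdim K j
      = ∑ j ∈ Finset.range N, fdim K (j+1) + fdim K 0 := Finset.sum_range_succ' _ _
  have h2 : ∑ j ∈ Finset.range N, fdim K (j+1) = 0 :=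
    Finset.sum_eq_zero fun j _ => hfs j
  have h3 : ∑ j ∈ Finset.range (N+1), rk k K j = 0 :=
    Finset.sum_eq_zero fun j _ => hrk j
  omega

lemma IC_empty_faces : (IC G ∅).faces = {∅} := by
  ext s
  constructor
  · rintro ⟨h1, -⟩
    have : s = ∅ := Finset.subset_empty.1 h1
    exact this
  · intro h
    have : s = ∅ := h
    subst this
    exact (IC G ∅).empty_mem

lemma cone_IC {A : Finset V} {u : V} (hu : u ∈ A) (hiso : ∀ w ∈ A, ¬ G.Adj u w) :
    totalBetti k (IC G A) = 0 := by
  apply cone_totalBetti_eq_zero k (IC G A) u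
  rintro s ⟨h1, h2⟩
  refine ⟨Finset.insert_subset hu h1, ?_⟩
  intro x hx y hy
  rcases Finset.mem_insert.1 hx with rfl | hx' <;>
    rcases Finset.mem_insert.1 hy with h | hy'
  · subst h; exact G.loopless.irrefl _
  · exact hiso y (h1 hy')
  · subst h
    exact fun hc => hiso x (h1 hx') hc.symm
  · exact h2 hx' hy'

lemma mesh_IC {A : Finset V} {u : V} (hu : u ∈ A) :
    totalBetti k (IC G A) ≤ totalBetti k (IC G (A.erase u))
      + totalBetti k (IC G (A.filter (fun w => ¬(w = u ∨ G.Adj u w)))) := by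
  rw [← delete_IC, ← link_IC G A u hu]
  exact meshulam k (IC G A) u (single_mem_IC G hu)

end TB
set_option maxHeartbeats 2000000
namespace TB

lemma t_lower {t : ℝ} (h0 : 0 < t) (h1 : t ≤ 1) (heq : t^4 + t^5 + t^6 = 1) :
    4/5 ≤ t := by
  nlinarith [pow_pos h0 2, pow_pos h0 3, sq_nonneg (t - 4/5), sq_nonneg t,
    sq_nonneg (t^2 - t), sq_nonneg (t^2+t), sq_nonneg (t^3 - t^2)]

lemma t_upper {t : ℝ} (h0 : 0 < t) (h1 : t ≤ 1) (heq : t^4 + t^5 + t^6 = 1) :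
    t ≤ 81/100 := by
  nlinarith [pow_pos h0 2, pow_pos h0 3, sq_nonneg (t - 81/100),
    sq_nonneg (t^2 - t), sq_nonneg (t^3 - t^2)]

lemma sum_t_le_one {t : ℝ} (h0 : 0 < t) (h1 : t ≤ 1) (heq : t^4 + t^5 + t^6 = 1) :
    ∀ δ : ℕ, 1 ≤ δ → ∑ r ∈ Finset.range δ, t^(2*δ - r) ≤ 1 := by
  have hlow := t_lower h0 h1 heq
  have hup := t_upper h0 h1 heq
  -- the inductive bound for δ ≥ 3
  have key : ∀ δ : ℕ, 3 ≤ δ → ∑ r ∈ Finset.range δ, t^(2*δ - r) ≤ 1 := by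
    intro δ hδ
    induction δ, hδ using Nat.le_induction with
    | base =>
      have : ∑ r ∈ Finset.range 3, t^(2*3 - r) = t^6 + t^5 + t^4 := by
        simp [Finset.sum_range_succ]
      rw [this]
      linarith [heq]
    | succ δ hδ ih =>
      have hstep : ∑ r ∈ Finset.range (δ+1), t^(2*(δ+1) - r)
          = t^(2*δ+2) + t * ∑ r ∈ Finset.range δ, t^(2*δ - r) := by
        rw [Finset.sum_range_succ']
        have h2 : ∀ r ∈ Finset.range δ, t^(2*(δ+1) - (r+1)) = t^(2*δ - r) * t := by
          intro r hr
          rw [Finset.mem_range] at hr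
          have he : 2*(δ+1) - (r+1) = (2*δ - r) + 1 := by omega
          rw [he, pow_succ]
        rw [Finset.sum_congr rfl h2, ← Finset.sum_mul]
        have he0 : 2*(δ+1) - 0 = 2*δ+2 := by omega
        rw [he0]
        ring
      rw [hstep]
      have hb1 : t^(2*δ+2) ≤ t^8 := by
        apply pow_le_pow_of_le_one h0.le h1
        omega
      have hb2 : t * ∑ r ∈ Finset.range δ, t^(2*δ - r) ≤ t * 1 :=
        mul_le_mul_of_nonneg_left ih h0.le
      have hb3 : t^8 ≤ (81/100:ℝ)^8 := by
        apply pow_le_pow_left₀ h0.le hup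
      have : ((81:ℝ)/100)^8 + 81/100 ≤ 1 := by norm_num
      nlinarith
  intro δ hδ
  match δ, hδ with
  | 1, _ =>
    have : ∑ r ∈ Finset.range 1, t^(2*1 - r) = t^2 := by simp
    rw [this]
    exact pow_le_one₀ h0.le h1
  | 2, _ =>
    have hs : ∑ r ∈ Finset.range 2, t^(2*2 - r) = t^4 + t^3 := by
      simp [Finset.sum_range_succ]
    rw [hs]
    have hq1 : ((4:ℝ)/5)^2 ≤ t^2 := pow_le_pow_left₀ (show (0:ℝ) ≤ 4/5 by norm_num) hlow 2
    have hq2 : ((4:ℝ)/5)^3 ≤ t^3 := pow_le_pow_left₀ (show (0:ℝ) ≤ 4/5 by norm_num) hlow 3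
    have h23 : 1 ≤ t^2 + t^3 := by nlinarith
    nlinarith [mul_le_mul_of_nonneg_left h23 (le_of_lt (pow_pos h0 3))]
  | (n+3), _ => exact key (n+3) (by omega)

lemma gamma_shift {Γ : ℝ} (hΓ : 0 < Γ) {e m : ℕ} (hem : e ≤ m) :
    Γ^m * (Γ⁻¹)^e = Γ^(m - e) := by
  rw [inv_pow]
  rw [mul_inv_eq_iff_eq_mul₀ (by positivity)]
  rw [← pow_add]
  congr 1
  omega

end TB
set_option synthInstance.maxHeartbeats 1000000
set_option maxHeartbeats 2000000
set_option linter.unusedSectionVars false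
namespace TB
variable {V : Type*} [Fintype V]
variable (k : Type*) [Field k] (G : SimpleGraph V)

lemma aux {Γ : ℝ} (hΓ1 : 1 ≤ Γ) (htf : G.CliqueFree 3) (M m δ : ℕ)
    (hIH : ∀ B : Finset V, B.card < M → (totalBetti k (IC G B) : ℝ) ≤ Γ ^ B.card)
    (v : V) :
    ∀ (n : ℕ) (S X : Finset V), S.card = n →
      S = X.filter (fun w => G.Adj v w) →
      v ∈ X → X.card ≤ M → X.card + δ = m + n → n ≤ δ →
      (∀ u ∈ S, δ ≤ (X.filter (fun w => G.Adj u w)).card) →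
      (totalBetti k (IC G X) : ℝ) ≤ Γ^m * ∑ r ∈ Finset.range n, (Γ⁻¹)^(2*δ - r) := by
  have hΓ0 : (0:ℝ) < Γ := lt_of_lt_of_le one_pos hΓ1
  intro n
  induction n with
  | zero =>
    intro S X hScard hSX hvX hXM hcard hnδ hdeg
    have hS : S = ∅ := Finset.card_eq_zero.1 hScard
    rw [hS] at hSX
    have hiso : ∀ w ∈ X, ¬ G.Adj v w := by
      intro w hw hadj
      have : w ∈ X.filter (fun w => G.Adj v w) := Finset.mem_filter.2 ⟨hw, hadj⟩
      rw [← hSX] at this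
      exact Finset.notMem_empty w this
    rw [cone_IC k G hvX hiso]
    simp
  | succ n ih =>
    intro S X hScard hSX hvX hXM hcard hnδ hdeg
    have hSne : S.Nonempty := Finset.card_pos.1 (by omega)
    obtain ⟨u, hu⟩ := hSne
    have huX : u ∈ X := (Finset.mem_filter.1 (hSX ▸ hu)).1
    have hadjvu : G.Adj v u := (Finset.mem_filter.1 (hSX ▸ hu)).2
    have hvne : v ≠ u := G.ne_of_adj hadjvu
    -- deletion of the closed neighbourhood of u
    set X' := X.filter (fun w => ¬(w = u ∨ G.Adj u w)) with hX'
    have hsplit : (X.filter (fun w => (w = u ∨ G.Adj u w))).card + X'.card = X.card :=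
      Finset.card_filter_add_card_filter_not _
    have hins : X.filter (fun w => w = u ∨ G.Adj u w)
        = insert u (X.filter (fun w => G.Adj u w)) := by
      ext w
      simp only [Finset.mem_filter, Finset.mem_insert]
      constructor
      · rintro ⟨hw, rfl | hadj⟩
        · exact Or.inl rfl
        · exact Or.inr ⟨hw, hadj⟩
      · rintro (rfl | ⟨hw, hadj⟩)
        · exact ⟨huX, Or.inl rfl⟩
        · exact ⟨hw, Or.inr hadj⟩
    have hnotmem : u ∉ X.filter (fun w => G.Adj u w) := by
      intro hc
      exact G.loopless.irrefl u (Finset.mem_filter.1 hc).2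
    have hineq1 : δ + 1 ≤ (X.filter (fun w => (w = u ∨ G.Adj u w))).card := by
      rw [hins, Finset.card_insert_of_notMem hnotmem]
      have := hdeg u hu
      omega
    have hX'card : X'.card + δ + 1 ≤ X.card := by omega
    have hXge : δ + 1 ≤ X.card := by
      calc δ + 1 ≤ (X.filter (fun w => (w = u ∨ G.Adj u w))).card := hineq1
        _ ≤ X.card := Finset.card_le_card (Finset.filter_subset _ _)
    -- branch 2 : Γ^m * t^(2δ-n)
    have hb2 : (totalBetti k (IC G X') : ℝ) ≤ Γ^m * (Γ⁻¹)^(2*δ - n) := by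
      have h1 : X'.card < M := by omega
      have h2 := hIH X' h1
      have h3 : X'.card + (2*δ - n) ≤ m := by omega
      calc (totalBetti k (IC G X') : ℝ) ≤ Γ ^ X'.card := h2
        _ ≤ Γ ^ (m - (2*δ - n)) := pow_le_pow_right₀ hΓ1 (by omega)
        _ = Γ^m * (Γ⁻¹)^(2*δ - n) := (gamma_shift hΓ0 (by omega)).symm
    -- branch 1 : the remaining neighbours
    have hb1 : (totalBetti k (IC G (X.erase u)) : ℝ)
        ≤ Γ^m * ∑ r ∈ Finset.range n, (Γ⁻¹)^(2*δ - r) := by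
      apply ih (S.erase u) (X.erase u)
      · rw [Finset.card_erase_of_mem hu, hScard]
        omega
      · rw [Finset.filter_erase, ← hSX]
      · exact Finset.mem_erase.2 ⟨hvne, hvX⟩
      · calc (X.erase u).card ≤ X.card := Finset.card_erase_le
          _ ≤ M := hXM
      · rw [Finset.card_erase_of_mem huX]
        omega
      · omega
      · intro u' hu'
        have hu'S : u' ∈ S := (Finset.mem_erase.1 hu').2
        have hu'ne : u' ≠ u := (Finset.mem_erase.1 hu').1
        have hadjvu' : G.Adj v u' := (Finset.mem_filter.1 (hSX ▸ hu'S)).2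
        have hnadj : ¬ G.Adj u' u := by
          intro hadj
          exact htf ({v, u', u} : Finset V)
            (SimpleGraph.is3Clique_triple_iff.2 ⟨hadjvu', hadjvu, hadj⟩)
        have heq : (X.erase u).filter (fun w => G.Adj u' w)
            = X.filter (fun w => G.Adj u' w) := by
          rw [Finset.filter_erase]
          apply Finset.erase_eq_of_notMem
          intro hc
          exact hnadj (Finset.mem_filter.1 hc).2
        rw [heq]
        exact hdeg u' hu'S
    -- combine via Meshulam
    have hmesh := mesh_IC k G huX
    have hcast : (totalBetti k (IC G X) : ℝ)
        ≤ (totalBetti k (IC G (X.erase u)) : ℝ) + (totalBetti k (IC G X') : ℝ) := by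
      rw [← Nat.cast_add]
      exact_mod_cast hmesh
    calc (totalBetti k (IC G X) : ℝ)
        ≤ (totalBetti k (IC G (X.erase u)) : ℝ) + (totalBetti k (IC G X') : ℝ) := hcast
      _ ≤ Γ^m * ∑ r ∈ Finset.range n, (Γ⁻¹)^(2*δ - r) + Γ^m * (Γ⁻¹)^(2*δ - n) :=
          add_le_add hb1 hb2
      _ = Γ^m * ∑ r ∈ Finset.range (n+1), (Γ⁻¹)^(2*δ - r) := by
          rw [Finset.sum_range_succ, mul_add]

lemma main_bound {Γ : ℝ} (hΓ1 : 1 ≤ Γ)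
    (ht : (Γ⁻¹)^4 + (Γ⁻¹)^5 + (Γ⁻¹)^6 = 1) (htf : G.CliqueFree 3) :
    ∀ (M : ℕ) (A : Finset V), A.card ≤ M →
      (totalBetti k (IC G A) : ℝ) ≤ Γ ^ A.card := by
  have hΓ0 : (0:ℝ) < Γ := lt_of_lt_of_le one_pos hΓ1
  have hbase : ∀ A : Finset V, A = ∅ → (totalBetti k (IC G A) : ℝ) ≤ Γ ^ A.card := by
    intro A hA
    subst hA
    rw [totalBetti_of_faces_eq_empty k (IC_empty_faces G)]
    simp
  intro M
  induction M with
  | zero =>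
    intro A hA
    exact hbase A (Finset.card_eq_zero.1 (by omega))
  | succ M ihM =>
    intro A hA
    by_cases hAe : A = ∅
    · exact hbase A hAe
    · have hne : A.Nonempty := Finset.nonempty_iff_ne_empty.2 hAe
      obtain ⟨v, hvA, hmin⟩ :=
        Finset.exists_min_image A (fun u => (A.filter (fun w => G.Adj u w)).card) hne
      set δ := (A.filter (fun w => G.Adj v w)).card with hδ
      by_cases hδ0 : δ = 0
      · have hfe : A.filter (fun w => G.Adj v w) = ∅ := by
          apply Finset.card_eq_zero.1
          omega
        have hiso : ∀ w ∈ A, ¬ G.Adj v w := by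
          intro w hw hadj
          have : w ∈ A.filter (fun w => G.Adj v w) := Finset.mem_filter.2 ⟨hw, hadj⟩
          rw [hfe] at this
          exact Finset.notMem_empty w this
        rw [cone_IC k G hvA hiso]
        simp
        positivity
      · have hδ1 : 1 ≤ δ := by omega
        have hIH : ∀ B : Finset V, B.card < A.card →
            (totalBetti k (IC G B) : ℝ) ≤ Γ ^ B.card := by
          intro B hB
          exact ihM B (by omega)
        have happ := aux k G hΓ1 htf A.card A.card δ hIH v δ
          (A.filter (fun w => G.Adj v w)) A rfl rfl hvA le_rfl rfl le_rfl
          (fun u hu => hmin u (Finset.mem_filter.1 hu).1)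
        have hsum : ∑ r ∈ Finset.range δ, (Γ⁻¹)^(2*δ - r) ≤ 1 := by
          apply sum_t_le_one (by positivity) _ ht δ hδ1
          rw [inv_le_one_iff₀]
          right
          exact hΓ1
        calc (totalBetti k (IC G A) : ℝ)
            ≤ Γ^A.card * ∑ r ∈ Finset.range δ, (Γ⁻¹)^(2*δ - r) := happ
          _ ≤ Γ^A.card * 1 := mul_le_mul_of_nonneg_left hsum (by positivity)
          _ = Γ^A.card := mul_one _

end TB
/-- If `Γ ∈ [1,2]` satisfies `Γ⁻⁴ + Γ⁻⁵ + Γ⁻⁶ = 1`, then for any finite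
simple triangle-free graph `G` with `n` vertices, `b(Ind(G)) ≤ Γ ^ n`. -/
theorem totalBetti_indComplex_le_of_triangleFree (k : Type*) [Field k]
    (Γ : ℝ) (hΓmem : Γ ∈ Set.Icc (1 : ℝ) 2)
    (hΓeq : Γ ^ (-4 : ℤ) + Γ ^ (-5 : ℤ) + Γ ^ (-6 : ℤ) = 1)
    (V : Type*) [Fintype V] (G : SimpleGraph V) (htf : G.CliqueFree 3)
    (n : ℕ) (hn : Fintype.card V = n) :
    (totalBetti k (indComplex G) : ℝ) ≤ Γ ^ n := by
  obtain ⟨hΓ1, hΓ2⟩ := hΓmem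
  have ht : (Γ⁻¹)^(4:ℕ) + (Γ⁻¹)^(5:ℕ) + (Γ⁻¹)^(6:ℕ) = 1 := by
    rw [← hΓeq]
    norm_num [zpow_neg, inv_pow]
  have hmain := TB.main_bound k G hΓ1 ht htf (Fintype.card V) Finset.univ
    (le_of_eq (Finset.card_univ))
  rw [TB.IC_univ] at hmain
  rwa [Finset.card_univ, hn] at hmain
end

section
/- Let k be a field. For any finite abstract simplicial complex K and any vertex v of K, the total Betti numbers satisfy b(K) ≤ b(K \ v) + b(lk_K v). -/
open Finset

attribute [local instance] Classical.propDecidable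

open SComplex

section Aux

variable {k : Type*} [Field k] {V : Type*} [Fintype V]

/-- standalone boundary coefficient -/
noncomputable def belt (k : Type*) [Field k] {V : Type*} [LinearOrder V] (s t : Finset V) : k :=
  if t ⊆ s then ∑ u ∈ s \ t, (-1 : k) ^ (s.filter (fun w => w < u)).card else 0

noncomputable def eps (k : Type*) [Field k] {V : Type*} [LinearOrder V] (v : V) (t : Finset V) : k :=
  (-1 : k) ^ (t.filter (fun w => w < v)).card

/-- `belt` with the canonical well-ordering instance. -/
noncomputable def beltW (k : Type*) [Field k] {V : Type*} (s t : Finset V) : k :=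
  @belt k _ V (IsWellOrder.linearOrder WellOrderingRel) s t

/-- `eps` with the canonical well-ordering instance. -/
noncomputable def epsW (k : Type*) [Field k] {V : Type*} (v : V) (t : Finset V) : k :=
  @eps k _ V (IsWellOrder.linearOrder WellOrderingRel) v t

lemma bdry_apply (K : SComplex V) (j : ℕ) (f : SComplex.Chains k K (j+1))
    (t : {s : Finset V // s ∈ K.faces ∧ s.card = j}) :
    SComplex.bdry k K j f t = ∑ s : {s : Finset V // s ∈ K.faces ∧ s.card = j + 1},
      f s * beltW k s.1 t.1 := by
  simp only [SComplex.bdry, LinearMap.sum_apply, LinearMap.comp_apply, LinearMap.proj_apply,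
    LinearMap.toSpanSingleton_apply, Finset.sum_apply, Pi.smul_apply, smul_eq_mul]
  rfl

end Aux
section Aux2
variable {k : Type*} [Field k] {V : Type*}

lemma exists_insert_of_card_succ {s t : Finset V} (hts : t ⊆ s) (h : s.card = t.card + 1) :
    ∃ x, x ∉ t ∧ s = insert x t := by
  have h1 : (s \ t).card = 1 := by
    rw [Finset.card_sdiff_of_subset hts, h]; omega
  obtain ⟨x, hx⟩ := Finset.card_eq_one.mp h1
  refine ⟨x, ?_, ?_⟩
  · have : x ∈ s \ t := hx ▸ Finset.mem_singleton_self x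
    exact (Finset.mem_sdiff.mp this).2
  · have h2 : t ∪ (s \ t) = s := Finset.union_sdiff_of_subset hts
    rw [hx] at h2
    rw [← h2, Finset.union_comm]
    rw [Finset.insert_eq]

lemma filter_lt_card_insert [LinearOrder V] {s : Finset V} {a u : V} (ha : a ∉ s) :
    ((insert a s).filter (fun w => w < u)).card
      = (s.filter (fun w => w < u)).card + if a < u then 1 else 0 := by
  classical
  rw [Finset.filter_insert]
  split
  · convert Finset.card_insert_of_notMem (fun h => ha (Finset.mem_filter.mp h).1) using 2
    ext b; simp
  · simp

lemma belt_not_subset [LinearOrder V] {s t : Finset V} (h : ¬ t ⊆ s) : belt k s t = 0 :=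
  if_neg h

lemma belt_insert_self [LinearOrder V] {t : Finset V} {x : V} (hx : x ∉ t) :
    belt k (insert x t) t = (-1 : k) ^ ((t.filter (fun w => w < x)).card) := by
  rw [belt, if_pos (Finset.subset_insert x t)]
  have h1 : insert x t \ t = {x} := by
    ext a; simp only [Finset.mem_sdiff, Finset.mem_insert, Finset.mem_singleton]
    constructor
    · rintro ⟨h | h, h2⟩
      · exact h
      · exact absurd h h2
    · rintro rfl; exact ⟨Or.inl rfl, hx⟩
  rw [h1, Finset.sum_singleton, filter_lt_card_insert hx, if_neg (lt_irrefl x)]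
  ring_nf

lemma belt_pair_cancel [LinearOrder V] {t : Finset V} {x y : V} (hxy : x ≠ y)
    (hx : x ∉ t) (hy : y ∉ t) :
    belt k (insert x (insert y t)) (insert x t) * belt k (insert x t) t
      + belt k (insert x (insert y t)) (insert y t) * belt k (insert y t) t = 0 := by
  rw [show insert x (insert y t) = insert y (insert x t) from Finset.insert_comm x y t]
  rw [show (belt k (insert y (insert x t)) (insert x t) : k)
      = belt k (insert x (insert y t)) (insert x t) from by rw [Finset.insert_comm]]
  have key : ∀ x y : V, x ∉ t → y ∉ t → x ≠ y →
      belt k (insert x (insert y t)) (insert x t) * belt k (insert x t) t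
        = (-1 : k) ^ ((t.filter (fun w => w < y)).card + ((if x < y then 1 else 0))
            + (t.filter (fun w => w < x)).card) := by
    intro x y hx hy hxy
    have hyx : y ∉ insert x t := by
      intro h
      rcases Finset.mem_insert.mp h with h | h
      · exact hxy h.symm
      · exact hy h
    have h1 : belt k (insert x (insert y t)) (insert x t)
        = (-1 : k) ^ (((insert x t).filter (fun w => w < y)).card) := by
      rw [Finset.insert_comm]
      exact belt_insert_self hyx
    rw [h1, belt_insert_self hx, filter_lt_card_insert hx, ← pow_add]
  rw [key x y hx hy hxy, key y x hy hx hxy.symm]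
  rcases hxy.lt_or_gt with h | h
  · rw [if_pos h, if_neg (not_lt.mpr h.le)]
    have e : (Finset.filter (fun w => w < y) t).card + 1 + (Finset.filter (fun w => w < x) t).card
        = ((Finset.filter (fun w => w < x) t).card + 0 + (Finset.filter (fun w => w < y) t).card) + 1 := by omega
    rw [e, pow_succ]; ring
  · rw [if_neg (not_lt.mpr h.le), if_pos h]
    have e : (Finset.filter (fun w => w < x) t).card + 1 + (Finset.filter (fun w => w < y) t).card
        = ((Finset.filter (fun w => w < y) t).card + 0 + (Finset.filter (fun w => w < x) t).card) + 1 := by omega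
    rw [e, pow_succ]; ring

end Aux2
section Aux3
variable {k : Type*} [Field k] {V : Type*} [Fintype V]

lemma beltW_not_subset {s t : Finset V} (h : ¬ t ⊆ s) : beltW k s t = 0 := by
  letI : LinearOrder V := IsWellOrder.linearOrder WellOrderingRel
  exact belt_not_subset h

lemma beltW_sum_zero (K : SComplex V) (j : ℕ)
    (s : {s : Finset V // s ∈ K.faces ∧ s.card = j + 2})
    (t : {s : Finset V // s ∈ K.faces ∧ s.card = j}) :
    ∑ u : {u : Finset V // u ∈ K.faces ∧ u.card = j + 1},
      beltW k s.1 u.1 * beltW k u.1 t.1 = 0 := by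
  letI : LinearOrder V := IsWellOrder.linearOrder WellOrderingRel
  show ∑ u : {u : Finset V // u ∈ K.faces ∧ u.card = j + 1},
      belt k s.1 u.1 * belt k u.1 t.1 = 0
  by_cases hts : t.1 ⊆ s.1
  · -- s \ t has two elements x y
    have hcard : (s.1 \ t.1).card = 2 := by
      rw [Finset.card_sdiff_of_subset hts, s.2.2, t.2.2]; omega
    obtain ⟨x, y, hxy, hset⟩ := Finset.card_eq_two.mp hcard
    have hxst : x ∈ s.1 \ t.1 := by rw [hset]; simp
    have hyst : y ∈ s.1 \ t.1 := by rw [hset]; simp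
    have hx : x ∉ t.1 := (Finset.mem_sdiff.mp hxst).2
    have hy : y ∉ t.1 := (Finset.mem_sdiff.mp hyst).2
    have hs_eq : s.1 = insert x (insert y t.1) := by
      ext a
      simp only [Finset.mem_insert]
      constructor
      · intro ha
        by_cases hat : a ∈ t.1
        · exact Or.inr (Or.inr hat)
        · have : a ∈ s.1 \ t.1 := Finset.mem_sdiff.mpr ⟨ha, hat⟩
          rw [hset] at this
          rcases Finset.mem_insert.mp this with h | h
          · exact Or.inl h
          · exact Or.inr (Or.inl (Finset.mem_singleton.mp h))
      · rintro (rfl | rfl | ha)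
        · exact (Finset.mem_sdiff.mp hxst).1
        · exact (Finset.mem_sdiff.mp hyst).1
        · exact hts ha
    have hu1m : insert x t.1 ∈ K.faces ∧ (insert x t.1).card = j + 1 := by
      constructor
      · refine K.down_closed s.2.1 ?_
        rw [hs_eq]
        exact Finset.insert_subset_insert x (Finset.subset_insert y t.1)
      · rw [Finset.card_insert_of_notMem hx, t.2.2]
    have hu2m : insert y t.1 ∈ K.faces ∧ (insert y t.1).card = j + 1 := by
      constructor
      · refine K.down_closed s.2.1 ?_
        intro a ha
        rw [hs_eq]
        rcases Finset.mem_insert.mp ha with rfl | ha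
        · exact Finset.mem_insert_of_mem (Finset.mem_insert_self _ _)
        · exact Finset.mem_insert_of_mem (Finset.mem_insert_of_mem ha)
      · rw [Finset.card_insert_of_notMem hy, t.2.2]
    set U1 : {u : Finset V // u ∈ K.faces ∧ u.card = j + 1} := ⟨insert x t.1, hu1m⟩
    set U2 : {u : Finset V // u ∈ K.faces ∧ u.card = j + 1} := ⟨insert y t.1, hu2m⟩
    have hU12 : U1 ≠ U2 := by
      intro h
      have : x ∈ insert y t.1 := by
        rw [show insert y t.1 = U2.1 from rfl, ← h]
        exact Finset.mem_insert_self x t.1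
      rcases Finset.mem_insert.mp this with h' | h'
      · exact hxy h'
      · exact hx h'
    have hsum : ∑ u : {u : Finset V // u ∈ K.faces ∧ u.card = j + 1},
        belt k s.1 u.1 * belt k u.1 t.1
        = ∑ u ∈ ({U1, U2} : Finset _), belt k s.1 u.1 * belt k u.1 t.1 := by
      refine (Finset.sum_subset (Finset.subset_univ _) ?_).symm
      intro u _ hu
      by_cases h1 : t.1 ⊆ u.1
      · by_cases h2 : u.1 ⊆ s.1
        · -- u = insert z t with z ∈ s \ t
          obtain ⟨z, hz, hzu⟩ := exists_insert_of_card_succ h1 (by rw [u.2.2, t.2.2])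
          have hzs : z ∈ s.1 \ t.1 := Finset.mem_sdiff.mpr
            ⟨h2 (hzu ▸ Finset.mem_insert_self z t.1), hz⟩
          rw [hset] at hzs
          exfalso
          apply hu
          rcases Finset.mem_insert.mp hzs with rfl | h'
          · exact Finset.mem_insert.mpr (Or.inl (Subtype.ext hzu))
          · rw [Finset.mem_singleton.mp h'] at hzu
            exact Finset.mem_insert.mpr (Or.inr (Finset.mem_singleton.mpr (Subtype.ext hzu)))
        · rw [belt_not_subset h2, zero_mul]
      · rw [belt_not_subset h1, mul_zero]
    rw [hsum, Finset.sum_pair hU12]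
    show belt k s.1 (insert x t.1) * belt k (insert x t.1) t.1
        + belt k s.1 (insert y t.1) * belt k (insert y t.1) t.1 = 0
    rw [hs_eq]
    exact belt_pair_cancel hxy hx hy
  · refine Finset.sum_eq_zero fun u _ => ?_
    by_cases h1 : t.1 ⊆ u.1
    · by_cases h2 : u.1 ⊆ s.1
      · exact absurd (h1.trans h2) hts
      · rw [belt_not_subset h2, zero_mul]
    · rw [belt_not_subset h1, mul_zero]

lemma bdry_bdry (K : SComplex V) (j : ℕ) (f : SComplex.Chains k K (j+2)) :
    SComplex.bdry k K j (SComplex.bdry k K (j+1) f) = 0 := by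
  funext t
  rw [bdry_apply]
  have h1 : ∀ u : {u : Finset V // u ∈ K.faces ∧ u.card = j + 1},
      SComplex.bdry k K (j+1) f u
        = ∑ s : {s : Finset V // s ∈ K.faces ∧ s.card = j + 2}, f s * beltW k s.1 u.1 :=
    fun u => bdry_apply K (j+1) f u
  calc ∑ u : {u : Finset V // u ∈ K.faces ∧ u.card = j + 1},
        SComplex.bdry k K (j+1) f u * beltW k u.1 t.1
      = ∑ u : {u : Finset V // u ∈ K.faces ∧ u.card = j + 1},
        ∑ s : {s : Finset V // s ∈ K.faces ∧ s.card = j + 2},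
          f s * (beltW k s.1 u.1 * beltW k u.1 t.1) := by
        refine Finset.sum_congr rfl fun u _ => ?_
        rw [h1 u, Finset.sum_mul]
        exact Finset.sum_congr rfl fun s _ => by ring
    _ = ∑ s : {s : Finset V // s ∈ K.faces ∧ s.card = j + 2},
        f s * ∑ u : {u : Finset V // u ∈ K.faces ∧ u.card = j + 1},
          beltW k s.1 u.1 * beltW k u.1 t.1 := by
        rw [Finset.sum_comm]
        exact Finset.sum_congr rfl fun s _ => by rw [Finset.mul_sum]
    _ = 0 := by
        refine Finset.sum_eq_zero fun s _ => ?_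
        rw [beltW_sum_zero K j s t, mul_zero]

end Aux3
section Aux4
variable {k : Type*} [Field k] {V : Type*} [Fintype V]

lemma link_not_mem_self {K : SComplex V} {v : V} {t : Finset V}
    (h : t ∈ (K.link v).faces) : v ∉ t := by
  rcases h with h | h
  · exact h.1
  · rw [Set.mem_singleton_iff.mp h]; simp

lemma link_insert_mem {K : SComplex V} {v : V} (hv : {v} ∈ K.faces) {t : Finset V}
    (h : t ∈ (K.link v).faces) : insert v t ∈ K.faces := by
  rcases h with h | h
  · exact h.2
  · rw [Set.mem_singleton_iff.mp h]
    simpa using hv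

lemma mem_link_of {K : SComplex V} {v : V} {t : Finset V} (h1 : v ∉ t)
    (h2 : insert v t ∈ K.faces) : t ∈ (K.link v).faces :=
  Or.inl ⟨h1, h2⟩

lemma erase_mem_link {K : SComplex V} {v : V} {s : Finset V} (hs : s ∈ K.faces)
    (hvs : v ∈ s) : s.erase v ∈ (K.link v).faces :=
  mem_link_of (Finset.notMem_erase v s) (by rwa [Finset.insert_erase hvs])

/-- Extension by zero of a chain of the deletion. -/
noncomputable def iota (K : SComplex V) (v : V) (j : ℕ) :
    SComplex.Chains k (K.delete v) j →ₗ[k] SComplex.Chains k K j where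
  toFun f s := if h : v ∉ s.1 then f ⟨s.1, ⟨s.2.1, h⟩, s.2.2⟩ else 0
  map_add' f g := by funext s; by_cases h : v ∈ s.1 <;> simp [h]
  map_smul' c f := by funext s; by_cases h : v ∈ s.1 <;> simp [h]

/-- Restriction of a chain of `K` to the deletion. -/
noncomputable def resDel (K : SComplex V) (v : V) (j : ℕ) :
    SComplex.Chains k K j →ₗ[k] SComplex.Chains k (K.delete v) j where
  toFun f s := f ⟨s.1, s.2.1.1, s.2.2⟩
  map_add' f g := rfl
  map_smul' c f := rfl

lemma resDel_iota (K : SComplex V) (v : V) (j : ℕ) (f : SComplex.Chains k (K.delete v) j) :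
    resDel K v j (iota K v j f) = f := by
  funext s
  show (if h : v ∉ s.1 then _ else 0) = f s
  rw [dif_pos s.2.1.2]

lemma iota_injective (K : SComplex V) (v : V) (j : ℕ) :
    Function.Injective (iota K v j (k := k)) :=
  Function.LeftInverse.injective (g := resDel K v j) (resDel_iota K v j)

lemma iota_resDel (K : SComplex V) (v : V) (j : ℕ) (f : SComplex.Chains k K j)
    (hf : ∀ s : {s : Finset V // s ∈ K.faces ∧ s.card = j}, v ∈ s.1 → f s = 0) :
    iota K v j (resDel K v j f) = f := by
  funext s
  show (if h : v ∉ s.1 then _ else 0) = f s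
  by_cases h : v ∉ s.1
  · rw [dif_pos h]
    exact congrArg f (Subtype.ext rfl)
  · rw [dif_neg h, (hf s (not_not.mp h)).symm]

/-- The chain map to the link (with a sign twist), degree `j+1 → j`. -/
noncomputable def pmap (K : SComplex V) (v : V) (hv : {v} ∈ K.faces) (j : ℕ) :
    SComplex.Chains k K (j+1) →ₗ[k] SComplex.Chains k (K.link v) j where
  toFun f t := epsW k v t.1 * f ⟨insert v t.1, link_insert_mem hv t.2.1,
      by rw [Finset.card_insert_of_notMem (link_not_mem_self t.2.1), t.2.2]⟩
  map_add' f g := by funext t; simp [mul_add]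
  map_smul' c f := by funext t; simp; ring

/-- A section of `pmap`. -/
noncomputable def qmap (K : SComplex V) (v : V) (j : ℕ) :
    SComplex.Chains k (K.link v) j →ₗ[k] SComplex.Chains k K (j+1) where
  toFun w s := if h : v ∈ s.1 then
      epsW k v (s.1.erase v) * w ⟨s.1.erase v, erase_mem_link s.2.1 h,
        by rw [Finset.card_erase_of_mem h, s.2.2]; omega⟩
    else 0
  map_add' f g := by funext s; by_cases h : v ∈ s.1 <;> simp [h, mul_add]
  map_smul' c f := by funext s; by_cases h : v ∈ s.1 <;> simp [h]; ring

lemma epsW_mul_self (v : V) (t : Finset V) : epsW k v t * epsW k v t = 1 := by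
  letI : LinearOrder V := IsWellOrder.linearOrder WellOrderingRel
  show eps k v t * eps k v t = 1
  rw [eps, ← pow_add, ← two_mul, pow_mul, neg_one_sq, one_pow]

lemma epsW_ne_zero (v : V) (t : Finset V) : epsW k v t ≠ 0 := by
  letI : LinearOrder V := IsWellOrder.linearOrder WellOrderingRel
  exact pow_ne_zero _ (neg_ne_zero.mpr one_ne_zero)

lemma pmap_qmap (K : SComplex V) (v : V) (hv : {v} ∈ K.faces) (j : ℕ)
    (w : SComplex.Chains k (K.link v) j) :
    pmap K v hv j (qmap K v j w) = w := by
  funext t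
  have hvt : v ∉ t.1 := link_not_mem_self t.2.1
  show epsW k v t.1 * (if h : v ∈ insert v t.1 then _ else 0) = w t
  rw [dif_pos (Finset.mem_insert_self v t.1)]
  have he : (insert v t.1).erase v = t.1 := Finset.erase_insert hvt
  have ht' : (⟨(insert v t.1).erase v, erase_mem_link (link_insert_mem hv t.2.1)
      (Finset.mem_insert_self v t.1), by
        rw [Finset.card_erase_of_mem (Finset.mem_insert_self v t.1),
          Finset.card_insert_of_notMem hvt, t.2.2]; omega⟩ :
      {s : Finset V // s ∈ (K.link v).faces ∧ s.card = j}) = t := Subtype.ext he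
  rw [ht', ← mul_assoc]
  conv_lhs => rw [show epsW k v t.1 * epsW k v ((insert v t.1).erase v)
      = epsW k v t.1 * epsW k v t.1 from by rw [he]]
  rw [epsW_mul_self, one_mul]

lemma pmap_eq_zero_support (K : SComplex V) (v : V) (hv : {v} ∈ K.faces) (j : ℕ)
    (f : SComplex.Chains k K (j+1)) (hf : pmap K v hv j f = 0)
    (s : {s : Finset V // s ∈ K.faces ∧ s.card = j + 1}) (hvs : v ∈ s.1) : f s = 0 := by
  have h0 : epsW k v (s.1.erase v) * f ⟨insert v (s.1.erase v),
      link_insert_mem hv (erase_mem_link s.2.1 hvs), by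
        rw [Finset.card_insert_of_notMem (Finset.notMem_erase v s.1),
          Finset.card_erase_of_mem hvs, s.2.2]; omega⟩ = 0 :=
    congrFun hf ⟨s.1.erase v, erase_mem_link s.2.1 hvs, by
      rw [Finset.card_erase_of_mem hvs, s.2.2]; omega⟩
  have hins : (⟨insert v (s.1.erase v), link_insert_mem hv (erase_mem_link s.2.1 hvs), by
        rw [Finset.card_insert_of_notMem (Finset.notMem_erase v s.1),
          Finset.card_erase_of_mem hvs, s.2.2]; omega⟩ :
      {u : Finset V // u ∈ K.faces ∧ u.card = j + 1}) = s :=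
    Subtype.ext (Finset.insert_erase hvs)
  rw [hins] at h0
  rcases mul_eq_zero.mp h0 with h | h
  · exact absurd h (epsW_ne_zero v _)
  · exact h

end Aux4
section Aux5
variable {k : Type*} [Field k] {V : Type*} [Fintype V]

omit [Fintype V] in
lemma eps_belt_insert [LinearOrder V] {v : V} {u t : Finset V} (hvu : v ∉ u) (hvt : v ∉ t)
    (hc : u.card = t.card + 1) :
    eps k v u * belt k u t = -(eps k v t * belt k (insert v u) (insert v t)) := by
  by_cases hts : t ⊆ u
  · obtain ⟨x, hx, rfl⟩ := exists_insert_of_card_succ hts hc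
    have hxv : x ≠ v := fun h => hvu (h ▸ Finset.mem_insert_self x t)
    have hxvt : x ∉ insert v t := by
      intro h
      rcases Finset.mem_insert.mp h with h | h
      · exact hxv h
      · exact hx h
    rw [belt_insert_self hx,
      show insert v (insert x t) = insert x (insert v t) from Finset.insert_comm v x t,
      belt_insert_self hxvt]
    unfold eps
    rw [filter_lt_card_insert (u := v) hx, filter_lt_card_insert (u := x) hvt]
    rcases hxv.lt_or_gt with h | h
    · rw [if_pos h, if_neg (not_lt.mpr h.le), add_zero, pow_succ]
      ring
    · rw [if_neg (not_lt.mpr h.le), if_pos h, add_zero, pow_succ]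
      ring
  · have h2 : ¬ insert v t ⊆ insert v u := by
      intro h
      apply hts
      intro a ha
      rcases Finset.mem_insert.mp (h (Finset.mem_insert_of_mem ha)) with rfl | h'
      · exact absurd ha hvt
      · exact h'
    rw [belt_not_subset hts, belt_not_subset h2]
    ring

omit [Fintype V] in
lemma epsW_beltW_insert {v : V} {u t : Finset V} (hvu : v ∉ u) (hvt : v ∉ t)
    (hc : u.card = t.card + 1) :
    epsW k v u * beltW k u t = -(epsW k v t * beltW k (insert v u) (insert v t)) := by
  letI : LinearOrder V := IsWellOrder.linearOrder WellOrderingRel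
  exact eps_belt_insert hvu hvt hc

lemma bdry_iota (K : SComplex V) (v : V) (j : ℕ) (f : SComplex.Chains k (K.delete v) (j+1)) :
    SComplex.bdry k K j (iota K v (j+1) f) = iota K v j (SComplex.bdry k (K.delete v) j f) := by
  funext t
  rw [bdry_apply]
  by_cases hvt : v ∈ t.1
  · have hrhs : iota K v j (SComplex.bdry k (K.delete v) j f) t = 0 := by
      show (if h : v ∉ t.1 then _ else 0) = 0
      rw [dif_neg (not_not_intro hvt)]
    rw [hrhs]
    refine Finset.sum_eq_zero fun s _ => ?_
    by_cases hvs : v ∉ s.1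
    · have : ¬ t.1 ⊆ s.1 := fun h => hvs (h hvt)
      rw [beltW_not_subset this, mul_zero]
    · show (if h : v ∉ s.1 then _ else 0) * _ = 0
      rw [dif_neg hvs, zero_mul]
  · have hrhs : iota K v j (SComplex.bdry k (K.delete v) j f) t
        = SComplex.bdry k (K.delete v) j f ⟨t.1, ⟨t.2.1, hvt⟩, t.2.2⟩ := by
      show (if h : v ∉ t.1 then _ else 0) = _
      rw [dif_pos hvt]
    rw [hrhs, bdry_apply]
    have hvanish : ∀ s ∈ (Finset.univ : Finset {s : Finset V // s ∈ K.faces ∧ s.card = j+1}),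
        s ∉ Finset.univ.filter (fun s : {s : Finset V // s ∈ K.faces ∧ s.card = j+1} => v ∉ s.1)
        → iota K v (j+1) f s * beltW k s.1 t.1 = 0 := by
      intro s _ hs
      have hvs : ¬ v ∉ s.1 := fun h => hs (Finset.mem_filter.mpr ⟨Finset.mem_univ _, h⟩)
      show (if h : v ∉ s.1 then _ else 0) * _ = 0
      rw [dif_neg hvs, zero_mul]
    rw [← Finset.sum_subset (Finset.filter_subset _ _) hvanish]
    refine (Finset.sum_bij' (fun (a : {s : Finset V // s ∈ (K.delete v).faces ∧ s.card = j+1})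
        (_ : a ∈ Finset.univ) =>
          (⟨a.1, a.2.1.1, a.2.2⟩ : {s : Finset V // s ∈ K.faces ∧ s.card = j+1}))
      (fun b hb => ⟨b.1, ⟨b.2.1, (Finset.mem_filter.mp hb).2⟩, b.2.2⟩) ?_ ?_ ?_ ?_ ?_).symm
    · intro a _
      exact Finset.mem_filter.mpr ⟨Finset.mem_univ _, a.2.1.2⟩
    · intro b _
      exact Finset.mem_univ _
    · intro a _
      exact Subtype.ext rfl
    · intro b _
      exact Subtype.ext rfl
    · intro a _
      show f a * beltW k a.1 t.1 = (if h : v ∉ a.1 then _ else 0) * beltW k a.1 t.1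
      rw [dif_pos a.2.1.2]

lemma bdry_pmap (K : SComplex V) (v : V) (hv : {v} ∈ K.faces) (j : ℕ)
    (f : SComplex.Chains k K (j+2)) :
    SComplex.bdry k (K.link v) j (pmap K v hv (j+1) f)
      = - pmap K v hv j (SComplex.bdry k K (j+1) f) := by
  funext t
  rw [bdry_apply]
  have hvt : v ∉ t.1 := link_not_mem_self t.2.1
  have hrhs : (- pmap K v hv j (SComplex.bdry k K (j+1) f)) t
      = ∑ s : {s : Finset V // s ∈ K.faces ∧ s.card = j + 2},
          f s * (-(epsW k v t.1 * beltW k s.1 (insert v t.1))) := by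
    show -(epsW k v t.1 * SComplex.bdry k K (j+1) f ⟨insert v t.1, link_insert_mem hv t.2.1,
        by rw [Finset.card_insert_of_notMem hvt, t.2.2]⟩) = _
    rw [bdry_apply, Finset.mul_sum, ← Finset.sum_neg_distrib]
    exact Finset.sum_congr rfl fun s _ => by ring
  rw [hrhs]
  have hvanish : ∀ s ∈ (Finset.univ : Finset {s : Finset V // s ∈ K.faces ∧ s.card = j+2}),
      s ∉ Finset.univ.filter (fun s : {s : Finset V // s ∈ K.faces ∧ s.card = j+2} => v ∈ s.1)
      → f s * (-(epsW k v t.1 * beltW k s.1 (insert v t.1))) = 0 := by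
    intro s _ hs
    have hvs : v ∉ s.1 := fun h => hs (Finset.mem_filter.mpr ⟨Finset.mem_univ _, h⟩)
    have : ¬ insert v t.1 ⊆ s.1 := fun h => hvs (h (Finset.mem_insert_self v t.1))
    rw [beltW_not_subset this]
    ring
  rw [← Finset.sum_subset (Finset.filter_subset _ _) hvanish]
  refine Finset.sum_bij' (fun (u : {u : Finset V // u ∈ (K.link v).faces ∧ u.card = j+1})
      (_ : u ∈ Finset.univ) =>
        (⟨insert v u.1, link_insert_mem hv u.2.1, by
          rw [Finset.card_insert_of_notMem (link_not_mem_self u.2.1), u.2.2]⟩ :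
          {s : Finset V // s ∈ K.faces ∧ s.card = j+2}))
    (fun b hb => ⟨b.1.erase v, erase_mem_link b.2.1 (Finset.mem_filter.mp hb).2, by
      rw [Finset.card_erase_of_mem (Finset.mem_filter.mp hb).2, b.2.2]; omega⟩) ?_ ?_ ?_ ?_ ?_
  · intro a _
    exact Finset.mem_filter.mpr ⟨Finset.mem_univ _, Finset.mem_insert_self v a.1⟩
  · intro b _
    exact Finset.mem_univ _
  · intro a _
    exact Subtype.ext (Finset.erase_insert (link_not_mem_self a.2.1))
  · intro b hb
    exact Subtype.ext (Finset.insert_erase (Finset.mem_filter.mp hb).2)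
  · intro u _
    show epsW k v u.1 * f ⟨insert v u.1, link_insert_mem hv u.2.1,
          by rw [Finset.card_insert_of_notMem (link_not_mem_self u.2.1), u.2.2]⟩
            * beltW k u.1 t.1
        = f ⟨insert v u.1, link_insert_mem hv u.2.1,
          by rw [Finset.card_insert_of_notMem (link_not_mem_self u.2.1), u.2.2]⟩
            * (-(epsW k v t.1 * beltW k (insert v u.1) (insert v t.1)))
    rw [← epsW_beltW_insert (link_not_mem_self u.2.1) hvt (by rw [u.2.2, t.2.2])]
    ring

end Aux5
section Aux6
variable {k : Type*} [Field k] {V : Type*} [Fintype V]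

instance chainsFD (K : SComplex V) (j : ℕ) : FiniteDimensional k (SComplex.Chains k K j) := by
  unfold SComplex.Chains
  infer_instance

/-- Induced map on homology. -/
noncomputable def hmap {K1 K2 : SComplex V} {j1 j2 : ℕ}
    (α : SComplex.Chains k K1 j1 →ₗ[k] SComplex.Chains k K2 j2)
    (hZ : ∀ x ∈ SComplex.cycles k K1 j1, α x ∈ SComplex.cycles k K2 j2)
    (hB : ∀ x ∈ SComplex.bdries k K1 j1, α x ∈ SComplex.bdries k K2 j2) :
    SComplex.homologyMod k K1 j1 →ₗ[k] SComplex.homologyMod k K2 j2 :=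
  Submodule.mapQ _ _ (α.restrict hZ) (by
    intro x hx
    simp only [Submodule.mem_comap, Submodule.coe_subtype] at hx ⊢
    exact hB x.1 hx)

lemma hmap_mk {K1 K2 : SComplex V} {j1 j2 : ℕ}
    (α : SComplex.Chains k K1 j1 →ₗ[k] SComplex.Chains k K2 j2)
    (hZ : ∀ x ∈ SComplex.cycles k K1 j1, α x ∈ SComplex.cycles k K2 j2)
    (hB : ∀ x ∈ SComplex.bdries k K1 j1, α x ∈ SComplex.bdries k K2 j2)
    (x : SComplex.cycles k K1 j1) :
    hmap α hZ hB (Submodule.Quotient.mk x)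
      = Submodule.Quotient.mk (α.restrict hZ x) :=
  Submodule.mapQ_apply _ _ _ x

omit [Fintype V] in
lemma finrank_le_of_ker_le_range {A B C : Type*} [AddCommGroup A] [Module k A]
    [AddCommGroup B] [Module k B] [AddCommGroup C] [Module k C]
    [FiniteDimensional k A] [FiniteDimensional k B] [FiniteDimensional k C]
    (f : A →ₗ[k] B) (g : B →ₗ[k] C) (h : LinearMap.ker g ≤ LinearMap.range f) :
    Module.finrank k B ≤ Module.finrank k A + Module.finrank k C := by
  have h1 := LinearMap.finrank_range_add_finrank_ker g
  have h2 : Module.finrank k (LinearMap.ker g) ≤ Module.finrank k (LinearMap.range f) :=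
    Submodule.finrank_mono h
  have h3 : Module.finrank k (LinearMap.range f) ≤ Module.finrank k A :=
    LinearMap.finrank_range_le f
  have h4 : Module.finrank k (LinearMap.range g) ≤ Module.finrank k C :=
    Submodule.finrank_le _
  omega

omit [Fintype V] in
lemma finrank_le_of_surj {A B : Type*} [AddCommGroup A] [Module k A]
    [AddCommGroup B] [Module k B] [FiniteDimensional k A]
    (g : A →ₗ[k] B) (h : Function.Surjective g) :
    Module.finrank k B ≤ Module.finrank k A := by
  have h1 := LinearMap.finrank_range_add_finrank_ker g
  rw [LinearMap.range_eq_top.mpr h, finrank_top] at h1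
  omega

lemma iota_cycles (K : SComplex V) (v : V) (j : ℕ) :
    ∀ x ∈ SComplex.cycles k (K.delete v) j, iota K v j x ∈ SComplex.cycles k K j := by
  intro x hx
  cases j with
  | zero => trivial
  | succ m =>
    have hx' : SComplex.bdry k (K.delete v) m x = 0 := hx
    show SComplex.bdry k K m (iota K v (m+1) x) = 0
    rw [bdry_iota, hx', map_zero]

lemma iota_bdries (K : SComplex V) (v : V) (j : ℕ) :
    ∀ x ∈ SComplex.bdries k (K.delete v) j, iota K v j x ∈ SComplex.bdries k K j := by
  rintro x ⟨y, rfl⟩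
  exact ⟨iota K v (j+1) y, bdry_iota K v j y⟩

lemma pmap_cycles (K : SComplex V) (v : V) (hv : {v} ∈ K.faces) (j : ℕ) :
    ∀ x ∈ SComplex.cycles k K (j+1), pmap K v hv j x ∈ SComplex.cycles k (K.link v) j := by
  intro x hx
  cases j with
  | zero => trivial
  | succ m =>
    have hx' : SComplex.bdry k K (m+1) x = 0 := hx
    show SComplex.bdry k (K.link v) m (pmap K v hv (m+1) x) = 0
    rw [bdry_pmap, hx', map_zero, neg_zero]

lemma pmap_bdries (K : SComplex V) (v : V) (hv : {v} ∈ K.faces) (j : ℕ) :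
    ∀ x ∈ SComplex.bdries k K (j+1), pmap K v hv j x ∈ SComplex.bdries k (K.link v) j := by
  rintro x ⟨y, rfl⟩
  refine ⟨- pmap K v hv (j+1) y, ?_⟩
  rw [map_neg, ← neg_one_smul k (SComplex.bdry k (K.link v) j (pmap K v hv (j+1) y))]
  rw [bdry_pmap]
  simp

lemma betti_zero_le (K : SComplex V) (v : V) :
    SComplex.bettiNum k K 0 ≤ SComplex.bettiNum k (K.delete v) 0 := by
  refine finrank_le_of_surj (hmap (iota K v 0) (iota_cycles K v 0) (iota_bdries K v 0)) ?_
  intro b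
  obtain ⟨z, rfl⟩ := Submodule.Quotient.mk_surjective _ b
  have hsupp : ∀ s : {s : Finset V // s ∈ K.faces ∧ s.card = 0}, v ∈ s.1 → z.1 s = 0 := by
    intro s hs
    exact absurd (Finset.card_eq_zero.mp s.2.2 ▸ hs) (Finset.notMem_empty v)
  refine ⟨Submodule.Quotient.mk ⟨resDel K v 0 z.1, trivial⟩, ?_⟩
  rw [hmap_mk]
  congr 1
  apply Subtype.ext
  show iota K v 0 (resDel K v 0 z.1) = z.1
  exact iota_resDel K v 0 z.1 hsupp

lemma betti_succ_le (K : SComplex V) (v : V) (hv : {v} ∈ K.faces) (j : ℕ) :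
    SComplex.bettiNum k K (j+1)
      ≤ SComplex.bettiNum k (K.delete v) (j+1) + SComplex.bettiNum k (K.link v) j := by
  refine finrank_le_of_ker_le_range
    (hmap (iota K v (j+1)) (iota_cycles K v (j+1)) (iota_bdries K v (j+1)))
    (hmap (pmap K v hv j) (pmap_cycles K v hv j) (pmap_bdries K v hv j)) ?_
  intro b hb
  obtain ⟨z, rfl⟩ := Submodule.Quotient.mk_surjective _ b
  rw [LinearMap.mem_ker, hmap_mk, Submodule.Quotient.mk_eq_zero, Submodule.mem_comap] at hb
  obtain ⟨w, hw0⟩ := hb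
  have hw : SComplex.bdry k (K.link v) j w = pmap K v hv j z.1 := hw0
  set g' : SComplex.Chains k K (j+2) := qmap K v (j+1) (-w) with hg'
  set h : SComplex.Chains k K (j+1) := z.1 - SComplex.bdry k K (j+1) g' with hh
  have hzc : SComplex.bdry k K j z.1 = 0 := z.2
  have hph : pmap K v hv j h = 0 := by
    rw [hh, map_sub]
    have hc : pmap K v hv j (SComplex.bdry k K (j+1) g')
        = - SComplex.bdry k (K.link v) j (pmap K v hv (j+1) g') := by
      rw [bdry_pmap]; simp
    rw [hc, hg', pmap_qmap, map_neg, neg_neg, hw, sub_self]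
  have hsupp : ∀ s : {s : Finset V // s ∈ K.faces ∧ s.card = j+1}, v ∈ s.1 → h s = 0 :=
    pmap_eq_zero_support K v hv j h hph
  have hch : SComplex.bdry k K j h = 0 := by
    rw [hh, map_sub, hzc, bdry_bdry, sub_zero]
  set f' : SComplex.Chains k (K.delete v) (j+1) := resDel K v (j+1) h with hf'
  have hif : iota K v (j+1) f' = h := iota_resDel K v (j+1) h hsupp
  have hf'c : f' ∈ SComplex.cycles k (K.delete v) (j+1) := by
    show SComplex.bdry k (K.delete v) j f' = 0
    apply iota_injective K v j
    rw [← bdry_iota, hif, hch, map_zero]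
  refine ⟨Submodule.Quotient.mk ⟨f', hf'c⟩, ?_⟩
  rw [hmap_mk]
  rw [Submodule.Quotient.eq]
  rw [Submodule.mem_comap]
  show iota K v (j+1) f' - z.1 ∈ SComplex.bdries k K (j+1)
  rw [hif, hh]
  refine ⟨-g', ?_⟩
  rw [map_neg]
  ring_nf

end Aux6

theorem totalBetti_le_delete_add_link' (k : Type*) [Field k]
    (V : Type*) [Fintype V] (K : SComplex V) (v : V) (hv : {v} ∈ K.faces) :
    SComplex.totalBetti k K
      ≤ SComplex.totalBetti k (K.delete v) + SComplex.totalBetti k (K.link v) := by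
  rw [SComplex.totalBetti, SComplex.totalBetti, SComplex.totalBetti]
  rw [Finset.sum_range_succ' (fun j => SComplex.bettiNum k K j) (Fintype.card V),
    Finset.sum_range_succ' (fun j => SComplex.bettiNum k (K.delete v) j) (Fintype.card V)]
  have h1 : ∑ i ∈ Finset.range (Fintype.card V), SComplex.bettiNum k K (i+1)
      ≤ ∑ i ∈ Finset.range (Fintype.card V), SComplex.bettiNum k (K.delete v) (i+1)
        + ∑ i ∈ Finset.range (Fintype.card V), SComplex.bettiNum k (K.link v) i := by
    rw [← Finset.sum_add_distrib]
    exact Finset.sum_le_sum fun i _ => betti_succ_le K v hv i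
  have h2 : ∑ i ∈ Finset.range (Fintype.card V), SComplex.bettiNum k (K.link v) i
      ≤ ∑ i ∈ Finset.range (Fintype.card V + 1), SComplex.bettiNum k (K.link v) i :=
    Finset.sum_le_sum_of_subset (Finset.range_subset_range.mpr (Nat.le_succ _))
  have h0 : SComplex.bettiNum k K 0 ≤ SComplex.bettiNum k (K.delete v) 0 := betti_zero_le K v
  omega

/-- For any finite abstract simplicial complex `K` and any vertex `v`
of `K`, `b(K) ≤ b(K \ v) + b(lk_K v)`. -/
theorem totalBetti_le_delete_add_link (k : Type*) [Field k]
    (V : Type*) [Fintype V] (K : SComplex V) (v : V) (hv : {v} ∈ K.faces) :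
    totalBetti k K ≤ totalBetti k (K.delete v) + totalBetti k (K.link v) := by
  exact totalBetti_le_delete_add_link' k V K v hv
end
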